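/- arXiv:2312.13920 — 6 statements merged into one kernel-verified Lean document; each statement's English description precedes it below -/
import Mathlib

section
/- Let 1 ≤ p < ∞ and let B_w be the weighted backward shift on ℓ_p(ℤ₊) associated with a weight sequence w = (w_n)_{n≥1}. Then B_w admits an invariant Borel probability measure different from the Dirac mass δ₀ at the origin if and only if ∑_{n=1}^∞ 1/|w₁⋯w_n|^p < ∞. -/
open MeasureTheory Filter
open scoped ENNReal NNReal Topology

noncomputable instance {𝕂 : Type*} [RCLike 𝕂] {p : ℝ≥0∞} [Fact (1 ≤ p)] :
    MeasurableSpace (lp (fun _ : ℕ => 𝕂) p) := borel _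

instance {𝕂 : Type*} [RCLike 𝕂] {p : ℝ≥0∞} [Fact (1 ≤ p)] :
    BorelSpace (lp (fun _ : ℕ => 𝕂) p) := ⟨rfl⟩

/-!
Write `π n = w₁ ⋯ wₙ`. The rescaled coordinates `π n * x n` are shifted by `B_w` without weights,
so `n ↦ 1 / π n` is a fixed point of `B_w`; when it lies in `ℓ_p`, its Dirac mass is invariant.

Conversely, let `m` be invariant and not `δ₀`. Since `B_wⁿ` carries coordinate `n` to coordinate
`0`, invariance forces `c = m {ε < ‖x 0‖} > 0` for some `ε > 0`, and then
`m {ε / ‖π n‖ < ‖x n‖} = c` for every `n`. Discarding a set `{‖x‖ > R}` of mass `< c`, Markov's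
inequality for the functions `‖x n‖ ^ p`, whose sum is `‖x‖ ^ p ≤ R ^ p`, bounds
`∑ (ε / ‖π n‖) ^ p`.
-/

theorem eq_dirac_of_measure_compl_singleton_eq_zero {α : Type*} [MeasurableSpace α]
    [MeasurableSingletonClass α] {μ : Measure α} [IsProbabilityMeasure μ] {a : α}
    (h : μ {a}ᶜ = 0) : μ = Measure.dirac a := by
  have hae : ∀ᵐ x ∂μ, x ∈ ({a} : Set α) := mem_ae_iff.2 h
  rw [← Measure.restrict_eq_self_of_ae_mem hae, Measure.restrict_singleton,
    (prob_compl_eq_zero_iff (MeasurableSet.singleton a)).1 h, one_smul]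

theorem tendsto_measure_norm_gt_atTop {E : Type*} [SeminormedAddGroup E] [MeasurableSpace E]
    [OpensMeasurableSpace E] (μ : Measure E) [IsFiniteMeasure μ] :
    Tendsto (fun R : ℝ => μ {x | R < ‖x‖}) atTop (𝓝 0) := by
  have hempty : ⋂ R : ℝ, {x : E | R < ‖x‖} = ∅ :=
    Set.iInter_eq_empty_iff.2 fun x => ⟨‖x‖, lt_irrefl ‖x‖⟩
  simpa [Function.comp_def, hempty] using
    tendsto_measure_iInter_atTop (μ := μ) (s := fun R : ℝ => {x : E | R < ‖x‖})
      (fun R => (isOpen_lt continuous_const continuous_norm).nullMeasurableSet)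
      (fun R S hRS x (hx : S < ‖x‖) => hRS.trans_lt hx) ⟨0, measure_ne_top μ _⟩

theorem lp.enorm_rpow_eq_tsum {α E : Type*} [NormedAddCommGroup E] {p : ℝ≥0∞} [Fact (1 ≤ p)]
    (hp : 0 < p.toReal) (x : lp (fun _ : α => E) p) :
    ‖x‖ₑ ^ p.toReal = ∑' i, ‖x i‖ₑ ^ p.toReal := by
  simp_rw [← ofReal_norm, ENNReal.ofReal_rpow_of_nonneg (norm_nonneg _) hp.le,
    lp.norm_rpow_eq_tsum hp]
  exact ENNReal.ofReal_tsum_of_nonneg (fun i => by positivity) ((lp.memℓp x).summable hp)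

theorem lp.continuous_apply {α : Type*} {E : α → Type*} [∀ i, NormedAddCommGroup (E i)]
    {p : ℝ≥0∞} [Fact (1 ≤ p)] (i : α) : Continuous fun x : lp E p => x i :=
  (_root_.continuous_apply i).comp lp.uniformContinuous_coe.continuous

theorem summable_rpow_of_le_measure_lt_norm_apply {E : Type*} [NormedAddCommGroup E]
    {p : ℝ≥0∞} [Fact (1 ≤ p)] (hp : p ≠ ⊤) [MeasurableSpace (lp (fun _ : ℕ => E) p)]
    [OpensMeasurableSpace (lp (fun _ : ℕ => E) p)] (m : Measure (lp (fun _ : ℕ => E) p))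
    [IsFiniteMeasure m] {a : ℕ → ℝ} (ha : ∀ n, 0 ≤ a n) {c : ℝ≥0∞} (hc : c ≠ 0)
    (h : ∀ n, c ≤ m {x | a n < ‖x n‖}) : Summable fun n => a n ^ p.toReal := by
  set q := p.toReal
  have hq : 0 < q := ENNReal.toReal_pos (zero_lt_one.trans_le Fact.out).ne' hp
  have hmeas : ∀ n, Measurable fun x : lp (fun _ : ℕ => E) p => ‖x n‖ₑ ^ q := fun n =>
    (ENNReal.continuous_rpow_const.comp (lp.continuous_apply n).enorm).measurable
  obtain ⟨R, hR⟩ :=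
    ((tendsto_measure_norm_gt_atTop m).eventually_lt_const (pos_iff_ne_zero.2 hc)).exists
  set K := {x : lp (fun _ : ℕ => E) p | ‖x‖ ≤ R}
  have hK : MeasurableSet K := (isClosed_le continuous_norm continuous_const).measurableSet
  set δ := c - m {x | R < ‖x‖}
  have hδ : δ ≠ 0 := (tsub_pos_of_lt hR).ne'
  have hmass : ∀ n, δ ≤ m.restrict K {x | ENNReal.ofReal (a n ^ q) ≤ ‖x n‖ₑ ^ q} := by
    intro n
    have hsub : {x : lp (fun _ : ℕ => E) p | a n < ‖x n‖} ⊆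
        {x | ENNReal.ofReal (a n ^ q) ≤ ‖x n‖ₑ ^ q} := fun x (hx : a n < ‖x n‖) => by
      show ENNReal.ofReal (a n ^ q) ≤ ‖x n‖ₑ ^ q
      rw [← ofReal_norm, ENNReal.ofReal_rpow_of_nonneg (norm_nonneg _) hq.le]
      exact ENNReal.ofReal_le_ofReal (Real.rpow_le_rpow (ha n) hx.le hq.le)
    rw [tsub_le_iff_right, Measure.restrict_apply' hK]
    calc c ≤ m {x | a n < ‖x n‖} := h n
      _ ≤ m ({x | a n < ‖x n‖} ∩ K) + m ({x | a n < ‖x n‖} \ K) :=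
        measure_le_inter_add_sdiff m _ K
      _ ≤ _ := add_le_add (measure_mono (Set.inter_subset_inter_left _ hsub))
        (measure_mono fun x hx => not_le.1 (show ¬‖x‖ ≤ R from hx.2))
  have hmarkov : ∀ n, ENNReal.ofReal (a n ^ q) * δ ≤ ∫⁻ x in K, ‖x n‖ₑ ^ q ∂m := fun n =>
    (mul_le_mul_right (hmass n) _).trans (mul_meas_ge_le_lintegral (hmeas n) _)
  have hpoint : ∀ x ∈ K, ∑' n, ‖x n‖ₑ ^ q ≤ ENNReal.ofReal (R ^ q) :=
    fun x (hx : ‖x‖ ≤ R) => by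
      rw [← lp.enorm_rpow_eq_tsum hq, ← ofReal_norm,
        ENNReal.ofReal_rpow_of_nonneg (norm_nonneg _) hq.le]
      exact ENNReal.ofReal_le_ofReal (Real.rpow_le_rpow (norm_nonneg _) hx hq.le)
  have hbound : (∑' n, ENNReal.ofReal (a n ^ q)) * δ ≤ ENNReal.ofReal (R ^ q) * m K :=
    calc (∑' n, ENNReal.ofReal (a n ^ q)) * δ
        ≤ ∑' n, ∫⁻ x in K, ‖x n‖ₑ ^ q ∂m := by
          rw [← ENNReal.tsum_mul_right]; exact ENNReal.tsum_le_tsum hmarkov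
      _ = ∫⁻ x in K, ∑' n, ‖x n‖ₑ ^ q ∂m :=
          (lintegral_tsum fun n => (hmeas n).aemeasurable).symm
      _ ≤ ∫⁻ _ in K, ENNReal.ofReal (R ^ q) ∂m := setLIntegral_mono measurable_const hpoint
      _ = ENNReal.ofReal (R ^ q) * m K := setLIntegral_const _ _
  have hsum : ∑' n, ENNReal.ofReal (a n ^ q) ≠ ⊤ := fun htop => by
    rw [htop, ENNReal.top_mul hδ, top_le_iff] at hbound
    exact ENNReal.mul_ne_top ENNReal.ofReal_ne_top (measure_ne_top m K) hbound
  exact (ENNReal.summable_toReal hsum).congr fun n =>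
    ENNReal.toReal_ofReal (Real.rpow_nonneg (ha n) _)

theorem prod_Icc_mul_iterate_apply {α R : Type*} [CommMonoid R] {T : α → α} {c : α → ℕ → R}
    {w : ℕ → R} (hT : ∀ x n, c (T x) n = w (n + 1) * c x (n + 1)) (k : ℕ) (x : α) (n : ℕ) :
    (∏ i ∈ Finset.Icc 1 n, w i) * c (T^[k] x) n =
      (∏ i ∈ Finset.Icc 1 (n + k), w i) * c x (n + k) := by
  induction k generalizing x with
  | zero => rfl
  | succ k ih =>
    rw [Function.iterate_succ_apply, ih, hT, ← add_assoc, Finset.prod_Icc_succ_top (by omega),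
      mul_assoc]

theorem iterate_apply_zero_eq_prod_mul {α R : Type*} [CommMonoid R] {T : α → α} {c : α → ℕ → R}
    {w : ℕ → R} (hT : ∀ x n, c (T x) n = w (n + 1) * c x (n + 1)) (k : ℕ) (x : α) :
    c (T^[k] x) 0 = (∏ i ∈ Finset.Icc 1 k, w i) * c x k := by
  simpa using prod_Icc_mul_iterate_apply hT k x 0

theorem prod_Icc_one_ne_zero {M₀ : Type*} [CommMonoidWithZero M₀] [NoZeroDivisors M₀]
    [Nontrivial M₀] {w : ℕ → M₀} (hw0 : ∀ n, 1 ≤ n → w n ≠ 0) (n : ℕ) :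
    ∏ i ∈ Finset.Icc 1 n, w i ≠ 0 :=
  Finset.prod_ne_zero_iff.2 fun i hi => hw0 i (Finset.mem_Icc.1 hi).1

section WeightedShift

variable {𝕂 : Type*} [RCLike 𝕂] {p : ℝ≥0∞} {w : ℕ → 𝕂}
  {T : lp (fun _ : ℕ => 𝕂) p → lp (fun _ : ℕ => 𝕂) p}

theorem exists_ne_zero_fixedPoint_of_summable (hw0 : ∀ n, 1 ≤ n → w n ≠ 0)
    (hT : ∀ x n, (T x : ℕ → 𝕂) n = w (n + 1) * (x : ℕ → 𝕂) (n + 1))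
    (hS : Summable fun n : ℕ => (1 : ℝ) / ‖∏ i ∈ Finset.Icc 1 (n + 1), w i‖ ^ p.toReal) :
    ∃ x, x ≠ 0 ∧ T x = x := by
  set y : ℕ → 𝕂 := fun n => (∏ i ∈ Finset.Icc 1 n, w i)⁻¹
  have hy : Memℓp y p := memℓp_gen <| (summable_nat_add_iff 1).1 <| hS.congr fun n => by
    simp only [y, norm_inv, Real.inv_rpow (norm_nonneg _), one_div]
  refine ⟨⟨y, hy⟩, fun h => ?_, lp.ext (funext fun n => ?_)⟩
  · simpa [y] using congrArg (fun x : lp (fun _ : ℕ => 𝕂) p => (x : ℕ → 𝕂) 0) h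
  · refine eq_inv_of_mul_eq_one_right ?_
    rw [← Function.iterate_one T, prod_Icc_mul_iterate_apply hT]
    exact mul_inv_cancel₀ (prod_Icc_one_ne_zero hw0 _)

variable [Fact (1 ≤ p)]

theorem measure_apply_zero_ne_zero_of_ne_dirac (hw0 : ∀ n, 1 ≤ n → w n ≠ 0)
    (hT : ∀ x n, (T x : ℕ → 𝕂) n = w (n + 1) * (x : ℕ → 𝕂) (n + 1))
    {m : Measure (lp (fun _ : ℕ => 𝕂) p)} [IsProbabilityMeasure m] (hm : MeasurePreserving T m m)
    (hne : m ≠ Measure.dirac 0) : m {x | (x : ℕ → 𝕂) 0 ≠ 0} ≠ 0 := by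
  have hopen : IsOpen {x : lp (fun _ : ℕ => 𝕂) p | (x : ℕ → 𝕂) 0 ≠ 0} :=
    isOpen_ne_fun (lp.continuous_apply 0) continuous_const
  have hcover :
      ({0}ᶜ : Set (lp (fun _ : ℕ => 𝕂) p)) ⊆ ⋃ k, T^[k] ⁻¹' {x | (x : ℕ → 𝕂) 0 ≠ 0} := by
    intro x hx
    obtain ⟨k, hk⟩ : ∃ k, (x : ℕ → 𝕂) k ≠ 0 := by
      by_contra! h
      exact hx (lp.ext (funext h))
    refine Set.mem_iUnion.2 ⟨k, ?_⟩
    show (T^[k] x : ℕ → 𝕂) 0 ≠ 0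
    rw [iterate_apply_zero_eq_prod_mul hT]
    exact mul_ne_zero (prod_Icc_one_ne_zero hw0 k) hk
  intro h0
  refine hne (eq_dirac_of_measure_compl_singleton_eq_zero (measure_mono_null hcover ?_))
  exact measure_iUnion_null fun k =>
    ((hm.iterate k).measure_preimage hopen.measurableSet.nullMeasurableSet).trans h0

theorem summable_of_measurePreserving_of_ne_dirac (hp : p ≠ ⊤) (hw0 : ∀ n, 1 ≤ n → w n ≠ 0)
    (hT : ∀ x n, (T x : ℕ → 𝕂) n = w (n + 1) * (x : ℕ → 𝕂) (n + 1))
    (m : Measure (lp (fun _ : ℕ => 𝕂) p)) [IsProbabilityMeasure m] (hm : MeasurePreserving T m m)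
    (hne : m ≠ Measure.dirac 0) :
    Summable fun n : ℕ => (1 : ℝ) / ‖∏ i ∈ Finset.Icc 1 (n + 1), w i‖ ^ p.toReal := by
  set q := p.toReal
  obtain ⟨j, hj⟩ : ∃ j : ℕ, 0 < m {x | 1 / ((j : ℝ) + 1) < ‖(x : ℕ → 𝕂) 0‖} := by
    refine exists_measure_pos_of_not_measure_iUnion_null fun h => ?_
    refine measure_apply_zero_ne_zero_of_ne_dirac hw0 hT hm hne (measure_mono_null ?_ h)
    intro x (hx : (x : ℕ → 𝕂) 0 ≠ 0)
    exact Set.mem_iUnion.2 (exists_nat_one_div_lt (norm_pos_iff.2 hx))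
  set ε : ℝ := 1 / ((j : ℝ) + 1)
  have hlevel : ∀ n, m {x | ε < ‖(x : ℕ → 𝕂) 0‖} ≤
      m {x : lp (fun _ : ℕ => 𝕂) p | ε / ‖∏ i ∈ Finset.Icc 1 n, w i‖ < ‖(x : ℕ → 𝕂) n‖} := by
    intro n
    have hpre : T^[n] ⁻¹' {x | ε < ‖(x : ℕ → 𝕂) 0‖} =
        {x : lp (fun _ : ℕ => 𝕂) p | ε / ‖∏ i ∈ Finset.Icc 1 n, w i‖ < ‖(x : ℕ → 𝕂) n‖} := by
      ext x
      simp only [Set.mem_preimage, Set.mem_ofPred_eq, iterate_apply_zero_eq_prod_mul hT, norm_mul,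
        div_lt_iff₀ (norm_pos_iff.2 (prod_Icc_one_ne_zero hw0 n)), mul_comm]
    rw [← hpre, (hm.iterate n).measure_preimage
      (isOpen_lt continuous_const (lp.continuous_apply 0).norm).measurableSet.nullMeasurableSet]
  have hsum := summable_rpow_of_le_measure_lt_norm_apply hp m
    (a := fun n => ε / ‖∏ i ∈ Finset.Icc 1 n, w i‖) (fun n => by positivity) hj.ne' hlevel
  have hεq : 0 < ε ^ q := Real.rpow_pos_of_pos (by positivity) q
  refine (summable_nat_add_iff (f := fun n => 1 / ‖∏ i ∈ Finset.Icc 1 n, w i‖ ^ q) 1).2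
    ((hsum.mul_left (ε ^ q)⁻¹).congr fun n => ?_)
  rw [Real.div_rpow (by positivity) (norm_nonneg _), ← mul_div_assoc, inv_mul_cancel₀ hεq.ne']

end WeightedShift

theorem weighted_shift_exists_nontrivial_invariant_measure_iff_general
    {𝕂 : Type*} [RCLike 𝕂] (p : ℝ≥0∞) [Fact (1 ≤ p)] (hp : p ≠ ⊤)
    (w : ℕ → 𝕂) (hw0 : ∀ n, 1 ≤ n → w n ≠ 0)
    (B : lp (fun _ : ℕ => 𝕂) p →L[𝕂] lp (fun _ : ℕ => 𝕂) p)
    (hB : ∀ (x : lp (fun _ : ℕ => 𝕂) p) (n : ℕ),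
        (B x : ∀ _ : ℕ, 𝕂) n = w (n + 1) * (x : ∀ _ : ℕ, 𝕂) (n + 1)) :
    (∃ m : Measure (lp (fun _ : ℕ => 𝕂) p), IsProbabilityMeasure m ∧
        (∀ A : Set (lp (fun _ : ℕ => 𝕂) p), MeasurableSet A → m (B ⁻¹' A) = m A) ∧
        m ≠ Measure.dirac 0) ↔
      Summable (fun n : ℕ =>
        (1 : ℝ) / ‖∏ i ∈ Finset.Icc 1 (n + 1), w i‖ ^ p.toReal) := by
  have hBm : Measurable B := B.continuous.measurable
  constructor
  · rintro ⟨m, _, hinv, hne⟩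
    refine summable_of_measurePreserving_of_ne_dirac hp hw0 hB m ⟨hBm, ?_⟩ hne
    exact Measure.ext fun A hA => by rw [Measure.map_apply hBm hA, hinv A hA]
  · intro hS
    obtain ⟨x, hx0, hBx⟩ := exists_ne_zero_fixedPoint_of_summable hw0 hB hS
    have hinv : MeasurePreserving B (Measure.dirac x) (Measure.dirac x) :=
      ⟨hBm, by rw [Measure.map_dirac' hBm, hBx]⟩
    exact ⟨Measure.dirac x, inferInstance, fun A hA => hinv.measure_preimage hA.nullMeasurableSet,
      dirac_ne_dirac hx0⟩

/-- A weighted backward shift `B_w` on `ℓ_p(ℤ₊)` admits an invariant Borel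
probability measure different from the Dirac mass at `0` if and only if
`∑_{n≥1} 1/|w₁⋯w_n|^p < ∞`. -/
theorem weighted_shift_exists_nontrivial_invariant_measure_iff
    {𝕂 : Type*} [RCLike 𝕂] (p : ℝ≥0∞) [Fact (1 ≤ p)] (hp : p ≠ ⊤)
    (w : ℕ → 𝕂) (hw0 : ∀ n, 1 ≤ n → w n ≠ 0)
    (hwbdd : ∃ M : ℝ, ∀ n, ‖w n‖ ≤ M)
    (B : lp (fun _ : ℕ => 𝕂) p →L[𝕂] lp (fun _ : ℕ => 𝕂) p)
    (hB : ∀ (x : lp (fun _ : ℕ => 𝕂) p) (n : ℕ),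
        (B x : ∀ _ : ℕ, 𝕂) n = w (n + 1) * (x : ∀ _ : ℕ, 𝕂) (n + 1)) :
    (∃ m : Measure (lp (fun _ : ℕ => 𝕂) p), IsProbabilityMeasure m ∧
        (∀ A : Set (lp (fun _ : ℕ => 𝕂) p), MeasurableSet A → m (B ⁻¹' A) = m A) ∧
        m ≠ Measure.dirac 0) ↔
      Summable (fun n : ℕ =>
        (1 : ℝ) / ‖∏ i ∈ Finset.Icc 1 (n + 1), w i‖ ^ p.toReal) :=
  weighted_shift_exists_nontrivial_invariant_measure_iff_general p hp w hw0 B hB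
end

section
/- Let 1 ≤ p < ∞ and let B_w be the weighted backward shift on ℓ_p(ℤ₊) associated with a weight sequence w = (w_n)_{n≥1}. Suppose there exist a vector x ∈ ℓ_p and a set of integers 𝒩 ⊆ ℤ₊ such that: (i) 𝒩 has positive upper density, i.e. limsup_{N→∞} #(𝒩 ∩ [0,N])/(N+1) > 0; (ii) sup_{n∈𝒩} ‖B_w^n x‖ < ∞; (iii) inf_{n∈𝒩} |⟨e₀*, B_w^n x⟩| > 0, where e₀* is the first coordinate functional. Then ∑_{n=1}^∞ 1/|w₁⋯w_n|^p < ∞. -/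
open MeasureTheory Filter
open scoped ENNReal NNReal

/-! ### Combinatorial auxiliary lemmas -/

/-- Bonferroni-type lower bound for the cardinality of a union. -/
lemma my_bonferroni (S : ℕ → Finset ℕ) (k : ℕ) :
    ∑ i ∈ Finset.range k, (S i).card ≤
      ((Finset.range k).biUnion S).card +
        ∑ j ∈ Finset.range k, ∑ i ∈ Finset.range j, ((S i) ∩ (S j)).card := by
  induction k with
  | zero => simp
  | succ k ih =>
    rw [Finset.sum_range_succ, Finset.sum_range_succ
      (f := fun j => ∑ i ∈ Finset.range j, ((S i) ∩ (S j)).card),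
      Finset.range_add_one, Finset.biUnion_insert]
    set U := (Finset.range k).biUnion S with hU
    have h1 : (S k ∪ U).card + (S k ∩ U).card = (S k).card + U.card :=
      Finset.card_union_add_card_inter _ _
    have h2 : S k ∩ U = (Finset.range k).biUnion (fun i => S i ∩ S k) := by
      ext y
      simp only [Finset.mem_inter, Finset.mem_biUnion, hU]
      tauto
    have h3 : (S k ∩ U).card ≤ ∑ i ∈ Finset.range k, ((S i) ∩ (S k)).card := by
      rw [h2]; exact Finset.card_biUnion_le
    omega

/-- Counting lemma: among `k` chain points, some pair has a popular difference. -/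
lemma my_exists_popular_pair (A : Finset ℕ) (N G k : ℕ) (δ : ℝ) (hδ : 0 < δ)
    (hA : A ⊆ Finset.Iic N) (hQ : δ * (N + 1) ≤ (A.card : ℝ))
    (hk : 4 ≤ (k : ℝ) * δ) (hN : G ≤ N)
    (g : ℕ → ℕ) (hg1 : ∀ j, j < k → 1 ≤ g j) (hgG : ∀ j, j < k → g j ≤ G)
    (hmono : ∀ i j, i < j → j < k → g i < g j) :
    ∃ i j, i < j ∧ j < k ∧
      A.card ≤ k ^ 2 * (A.filter (fun n => n + (g j - g i) ∈ A)).card := by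
  classical
  by_contra hcon
  push_neg at hcon
  set Q := A.card with hQdef
  set S : ℕ → Finset ℕ := fun i => A.image (· + g i) with hS
  have hmemS : ∀ i y, y ∈ S i ↔ ∃ a ∈ A, a + g i = y := by
    intro i y
    simp [hS]
  have hcardS : ∀ i, (S i).card = Q := by
    intro i
    exact Finset.card_image_of_injective _ (add_left_injective (g i))
  have hsub : (Finset.range k).biUnion S ⊆ Finset.Iic (N + G) := by
    intro y hy
    simp only [Finset.mem_biUnion, Finset.mem_range] at hy
    obtain ⟨i, hi, hyi⟩ := hy
    obtain ⟨a, ha, rfl⟩ := (hmemS i y).mp hyi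
    have h1 : a ≤ N := Finset.mem_Iic.mp (hA ha)
    have h2 := hgG i hi
    simp only [Finset.mem_Iic]
    omega
  have hUcard : ((Finset.range k).biUnion S).card ≤ N + G + 1 := by
    have := Finset.card_le_card hsub
    simpa [Nat.card_Iic] using this
  have hpair : ∀ i j, i < j → j < k → k ^ 2 * ((S i) ∩ (S j)).card ≤ Q := by
    intro i j hij hjk
    have hr : ((S i) ∩ (S j)).card ≤
        (A.filter (fun n => n + (g j - g i) ∈ A)).card := by
      apply Finset.card_le_card_of_injOn (fun y => y - g j)
      · intro y hy
        obtain ⟨hy1, hy2⟩ := Finset.mem_inter.mp hy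
        obtain ⟨a, ha, hay⟩ := (hmemS i y).mp hy1
        obtain ⟨b, hb, hby⟩ := (hmemS j y).mp hy2
        have hgij : g i < g j := hmono i j hij hjk
        simp only [Finset.mem_coe, Finset.mem_filter]
        constructor
        · have : y - g j = b := by omega
          rw [this]; exact hb
        · have : y - g j + (g j - g i) = a := by omega
          rw [this]; exact ha
      · intro y1 h1 y2 h2 he
        obtain ⟨b1, _, hb1⟩ := (hmemS j y1).mp (Finset.mem_inter.mp (Finset.mem_coe.mp h1)).2
        obtain ⟨b2, _, hb2⟩ := (hmemS j y2).mp (Finset.mem_inter.mp (Finset.mem_coe.mp h2)).2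
        simp only at he
        omega
    have h1 := hcon i j hij hjk
    have h2 := Nat.mul_le_mul_left (k ^ 2) hr
    omega
  have hbon := my_bonferroni S k
  have hsum1 : ∑ i ∈ Finset.range k, (S i).card = k * Q := by
    simp [hcardS, Finset.sum_const, mul_comm]
  have hSig : 2 * (k ^ 2 * ∑ j ∈ Finset.range k, ∑ i ∈ Finset.range j, ((S i) ∩ (S j)).card)
      ≤ k * k * Q := by
    have h1 : k ^ 2 * ∑ j ∈ Finset.range k, ∑ i ∈ Finset.range j, ((S i) ∩ (S j)).card
        ≤ ∑ j ∈ Finset.range k, j * Q := by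
      rw [Finset.mul_sum]
      apply Finset.sum_le_sum
      intro j hj
      rw [Finset.mul_sum]
      calc ∑ i ∈ Finset.range j, k ^ 2 * ((S i) ∩ (S j)).card
          ≤ ∑ _i ∈ Finset.range j, Q := by
            apply Finset.sum_le_sum
            intro i hi
            exact hpair i j (Finset.mem_range.mp hi) (Finset.mem_range.mp hj)
        _ = j * Q := by simp [mul_comm]
    have h2 : (∑ j ∈ Finset.range k, j) * 2 = k * (k - 1) :=
      Finset.sum_range_id_mul_two k
    have h3 : k * (k - 1) * Q ≤ k * k * Q := by
      apply Nat.mul_le_mul_right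
      apply Nat.mul_le_mul_left
      omega
    calc 2 * (k ^ 2 * ∑ j ∈ Finset.range k, ∑ i ∈ Finset.range j, ((S i) ∩ (S j)).card)
        ≤ 2 * ∑ j ∈ Finset.range k, j * Q := by omega
      _ = ((∑ j ∈ Finset.range k, j) * 2) * Q := by rw [← Finset.sum_mul]; ring
      _ = k * (k - 1) * Q := by rw [h2]
      _ ≤ k * k * Q := h3
  have hmain : 2 * k ^ 3 * Q ≤ 2 * k ^ 2 * (N + G + 1) + k * k * Q := by
    have := Nat.mul_le_mul_left (2 * k ^ 2) hbon
    calc 2 * k ^ 3 * Q = 2 * k ^ 2 * (k * Q) := by ring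
      _ = 2 * k ^ 2 * (∑ i ∈ Finset.range k, (S i).card) := by rw [hsum1]
      _ ≤ 2 * k ^ 2 * (((Finset.range k).biUnion S).card +
            ∑ j ∈ Finset.range k, ∑ i ∈ Finset.range j, ((S i) ∩ (S j)).card) := this
      _ ≤ 2 * k ^ 2 * (N + G + 1) + k * k * Q := by
          rw [Nat.mul_add]
          have h4 := Nat.mul_le_mul_left (2 * k ^ 2) hUcard
          have h5 : 2 * k ^ 2 *
              (∑ j ∈ Finset.range k, ∑ i ∈ Finset.range j, ((S i) ∩ (S j)).card)
              ≤ k * k * Q := by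
            calc 2 * k ^ 2 * _ = 2 * (k ^ 2 * _) := by ring
              _ ≤ k * k * Q := hSig
          omega
  have hkpos : (0 : ℝ) < k := by
    rcases Nat.eq_zero_or_pos k with h | h
    · subst h; simp at hk; linarith
    · exact_mod_cast h
  have hQle : (Q : ℝ) ≤ (N : ℝ) + 1 := by
    have := Finset.card_le_card hA
    rw [Nat.card_Iic] at this
    exact_mod_cast this
  have hkQ : 4 * ((N : ℝ) + 1) ≤ (k : ℝ) * Q := by
    have h1 : (4 : ℝ) / δ ≤ k := by
      rw [div_le_iff₀ hδ]; linarith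
    have h2 : (0 : ℝ) ≤ δ * (N + 1) := by positivity
    calc 4 * ((N : ℝ) + 1) = (4 / δ) * (δ * (N + 1)) := by field_simp
      _ ≤ (k : ℝ) * (Q : ℝ) := by
          apply mul_le_mul h1 hQ h2 hkpos.le
  have hmainR : 2 * (k : ℝ) ^ 3 * Q ≤ 2 * (k : ℝ) ^ 2 * ((N : ℝ) + G + 1)
      + (k : ℝ) * k * Q := by
    have := hmain
    have : ((2 * k ^ 3 * Q : ℕ) : ℝ) ≤ ((2 * k ^ 2 * (N + G + 1) + k * k * Q : ℕ) : ℝ) :=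
      Nat.cast_le.mpr this
    push_cast at this
    linarith
  have hGN : (G : ℝ) ≤ N := by exact_mod_cast hN
  nlinarith [mul_le_mul_of_nonneg_left hkQ (by positivity : (0:ℝ) ≤ 2 * (k:ℝ)^2),
    mul_le_mul_of_nonneg_left hQle (by positivity : (0:ℝ) ≤ (k:ℝ)^2),
    sq_nonneg ((k:ℝ)), hkpos]

/-! ### The finite sections of `𝒩` and popular differences -/

noncomputable def myAN (𝒩 : Set ℕ) (N : ℕ) : Finset ℕ :=
  @Finset.filter _ (· ∈ 𝒩) (Classical.decPred _) (Finset.Iic N)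

lemma mem_myAN {𝒩 : Set ℕ} {N n : ℕ} : n ∈ myAN 𝒩 N ↔ n ≤ N ∧ n ∈ 𝒩 :=
  (@Finset.mem_filter ℕ (· ∈ 𝒩) (Classical.decPred _) (Finset.Iic N) n).trans
    (by rw [Finset.mem_Iic])

/-- `d` is a popular difference of `𝒩 ∩ [0, N]` (at popularity level `1/k²`). -/
def myPop (𝒩 : Set ℕ) (k N d : ℕ) : Prop :=
  (myAN 𝒩 N).card ≤ k ^ 2 * ((myAN 𝒩 N).filter (fun n => n + d ∈ myAN 𝒩 N)).card

noncomputable instance myPop.decidable (𝒩 : Set ℕ) (k N d : ℕ) :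
    Decidable (myPop 𝒩 k N d) := Nat.decLe _ _

/-- Key combinatorial step: bounded windows meeting the popular differences, at a single
scale `N`, reaching up to an arbitrary threshold `T`. -/
lemma my_windows (𝒩 : Set ℕ) (δ : ℝ) (hδ : 0 < δ) (k : ℕ) (hk : 4 ≤ (k : ℝ) * δ)
    (hfreq : ∀ N₀ : ℕ, ∃ N, N₀ ≤ N ∧ δ * (N + 1) ≤ ((myAN 𝒩 N).card : ℝ)) :
    ∃ h : ℕ, ∀ T : ℕ, ∃ N, δ * (N + 1) ≤ ((myAN 𝒩 N).card : ℝ) ∧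
      ∀ t, 1 ≤ t → t ≤ T → ∃ d, t ≤ d ∧ d ≤ t + h ∧ myPop 𝒩 k N d := by
  by_contra hcon
  push_neg at hcon
  choose τ hτ using hcon
  set β : ℕ → ℕ := fun j => Nat.rec 1 (fun j b => τ b + b + 1) j with hβ
  have hβ0 : β 0 = 1 := rfl
  have hβs : ∀ j, β (j + 1) = τ (β j) + β j + 1 := fun j => rfl
  have hβM : Monotone β := monotone_nat_of_le_succ (fun j => by rw [hβs]; omega)
  obtain ⟨N, hNge, hNgood⟩ := hfreq (β k)
  have hbad : ∀ j, ∃ t, 1 ≤ t ∧ t ≤ τ (β j) ∧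
      ∀ d, t ≤ d → d ≤ t + β j → ¬ myPop 𝒩 k N d := fun j => hτ (β j) N hNgood
  choose t ht1 ht2 htbad using hbad
  set g : ℕ → ℕ := fun j => Nat.rec 1 (fun j gj => t j + gj + 1) j with hgdef
  have hg0 : g 0 = 1 := rfl
  have hgs : ∀ j, g (j + 1) = t j + g j + 1 := fun j => rfl
  have hgβ : ∀ j, g j ≤ β j := by
    intro j
    induction j with
    | zero => rw [hg0, hβ0]
    | succ j ih => rw [hgs, hβs]; have := ht2 j; omega
  have hg1 : ∀ j, 1 ≤ g j := by
    intro j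
    induction j with
    | zero => rw [hg0]
    | succ j ih => rw [hgs]; omega
  have hgmono : StrictMono g :=
    strictMono_nat_of_lt_succ (fun j => by rw [hgs]; omega)
  obtain ⟨i, j, hij, hjk, hpop⟩ :=
    my_exists_popular_pair (myAN 𝒩 N) N (β k) k δ hδ
      (fun _ hx => Finset.mem_Iic.mpr (mem_myAN.mp hx).1) hNgood hk hNge g
      (fun j _ => hg1 j)
      (fun j hj => (hgβ j).trans (hβM (Nat.le_of_lt hj)))
      (fun i j hij _ => hgmono hij)
  obtain ⟨j', rfl⟩ : ∃ j'', j = j'' + 1 := ⟨j - 1, by omega⟩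
  have hgi : g i ≤ g j' := hgmono.monotone (by omega)
  have hgsj := hgs j'
  have hgβj := hgβ j'
  have hg1i := hg1 i
  refine htbad j' (g (j' + 1) - g i) (by omega) (by omega) hpop

/-- At a good scale, the sum of `a d` over popular differences `d` is uniformly bounded. -/
lemma my_popular_sum (𝒩 : Set ℕ) (a : ℕ → ℝ) (ha : ∀ d, 0 ≤ a d) (K : ℝ)
    (k N T' : ℕ) (hQpos : 0 < (myAN 𝒩 N).card)
    (hK : ∀ n ∈ 𝒩, ∀ F : Finset ℕ, (∀ d ∈ F, 1 ≤ d ∧ n + d ∈ 𝒩) → ∑ d ∈ F, a d ≤ K) :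
    ∑ d ∈ (Finset.Icc 1 T').filter (fun d => myPop 𝒩 k N d), a d ≤ (k : ℝ) ^ 2 * K := by
  classical
  set A := myAN 𝒩 N with hA
  set Q := A.card with hQ
  set P := (Finset.Icc 1 T').filter (fun d => myPop 𝒩 k N d) with hP
  set r : ℕ → ℕ := fun d => (A.filter (fun n => n + d ∈ A)).card with hr
  have step1 : (Q : ℝ) * ∑ d ∈ P, a d ≤ (k : ℝ) ^ 2 * ∑ d ∈ P, (r d : ℝ) * a d := by
    rw [Finset.mul_sum, Finset.mul_sum]
    apply Finset.sum_le_sum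
    intro d hd
    have hpop : Q ≤ k ^ 2 * r d := (Finset.mem_filter.mp hd).2
    have : (Q : ℝ) ≤ (k : ℝ) ^ 2 * (r d : ℝ) := by exact_mod_cast hpop
    have := mul_le_mul_of_nonneg_right this (ha d)
    linarith [this]
  have step2 : ∑ d ∈ P, (r d : ℝ) * a d =
      ∑ n ∈ A, ∑ d ∈ P.filter (fun d => n + d ∈ A), a d := by
    have e1 : ∀ d, (r d : ℝ) * a d = ∑ n ∈ A, if n + d ∈ A then a d else 0 := by
      intro d
      rw [← Finset.sum_filter, Finset.sum_const, nsmul_eq_mul]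
    calc ∑ d ∈ P, (r d : ℝ) * a d
        = ∑ d ∈ P, ∑ n ∈ A, if n + d ∈ A then a d else 0 :=
          Finset.sum_congr rfl (fun d _ => e1 d)
      _ = ∑ n ∈ A, ∑ d ∈ P, if n + d ∈ A then a d else 0 := Finset.sum_comm
      _ = ∑ n ∈ A, ∑ d ∈ P.filter (fun d => n + d ∈ A), a d :=
          Finset.sum_congr rfl (fun n _ => (Finset.sum_filter _ _).symm)
  have step3 : ∑ n ∈ A, ∑ d ∈ P.filter (fun d => n + d ∈ A), a d ≤ (Q : ℝ) * K := by
    calc ∑ n ∈ A, ∑ d ∈ P.filter (fun d => n + d ∈ A), a d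
        ≤ ∑ _n ∈ A, K := by
          apply Finset.sum_le_sum
          intro n hn
          apply hK n (mem_myAN.mp hn).2
          intro d hd
          have h1 := Finset.mem_filter.mp hd
          have h2 := Finset.mem_filter.mp h1.1
          exact ⟨(Finset.mem_Icc.mp h2.1).1, (mem_myAN.mp h1.2).2⟩
      _ = (Q : ℝ) * K := by rw [Finset.sum_const, nsmul_eq_mul]
  have hQR : (0 : ℝ) < (Q : ℝ) := by exact_mod_cast hQpos
  have : (Q : ℝ) * ∑ d ∈ P, a d ≤ (Q : ℝ) * ((k : ℝ) ^ 2 * K) := by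
    calc (Q : ℝ) * ∑ d ∈ P, a d ≤ (k : ℝ) ^ 2 * ∑ d ∈ P, (r d : ℝ) * a d := step1
      _ = (k : ℝ) ^ 2 * ∑ n ∈ A, ∑ d ∈ P.filter (fun d => n + d ∈ A), a d := by rw [step2]
      _ ≤ (k : ℝ) ^ 2 * ((Q : ℝ) * K) :=
          mul_le_mul_of_nonneg_left step3 (by positivity)
      _ = (Q : ℝ) * ((k : ℝ) ^ 2 * K) := by ring
  exact le_of_mul_le_mul_left this hQR

/-! ### Operator-side auxiliary lemmas -/

section op
variable {𝕂 : Type*} [RCLike 𝕂] {p : ℝ≥0∞} [Fact (1 ≤ p)]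
variable (w : ℕ → 𝕂) (B : lp (fun _ : ℕ => 𝕂) p →L[𝕂] lp (fun _ : ℕ => 𝕂) p)

lemma my_coord (hB : ∀ (x : lp (fun _ : ℕ => 𝕂) p) (n : ℕ),
      (B x : ∀ _ : ℕ, 𝕂) n = w (n + 1) * (x : ∀ _ : ℕ, 𝕂) (n + 1))
    (n : ℕ) (x : lp (fun _ : ℕ => 𝕂) p) (k : ℕ) :
    ((B ^ n) x : ∀ _ : ℕ, 𝕂) k =
      (∏ i ∈ Finset.Ioc k (k + n), w i) * (x : ∀ _ : ℕ, 𝕂) (k + n) := by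
  induction n generalizing x k with
  | zero => simp
  | succ n ih =>
    rw [pow_succ, ContinuousLinearMap.mul_apply, ih (B x) k, hB x (k + n),
      show k + (n + 1) = (k + n) + 1 by omega,
      Finset.prod_Ioc_succ_top (by omega : k ≤ k + n)]
    ring

end op

noncomputable def myPi {𝕂 : Type*} [RCLike 𝕂] (w : ℕ → 𝕂) (d : ℕ) : ℝ :=
  ‖∏ i ∈ Finset.Icc 1 d, w i‖

noncomputable def mya {𝕂 : Type*} [RCLike 𝕂] (w : ℕ → 𝕂) (pr : ℝ) (d : ℕ) : ℝ :=
  1 / myPi w d ^ pr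

section pi
variable {𝕂 : Type*} [RCLike 𝕂] {w : ℕ → 𝕂}

lemma my_Icc_Ioc (d : ℕ) : Finset.Icc 1 d = Finset.Ioc 0 d := Finset.Icc_add_one_left_eq_Ioc 0 d

lemma myPi_pos (hw0 : ∀ n, 1 ≤ n → w n ≠ 0) (d : ℕ) : 0 < myPi w d := by
  rw [myPi, norm_pos_iff]
  exact Finset.prod_ne_zero_iff.mpr fun i hi => hw0 i (Finset.mem_Icc.mp hi).1

lemma myPi_split (d n : ℕ) :
    myPi w (d + n) = myPi w d * ‖∏ i ∈ Finset.Ioc d (d + n), w i‖ := by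
  rw [myPi, myPi, my_Icc_Ioc, my_Icc_Ioc, ← norm_mul,
    Finset.prod_Ioc_consecutive _ (Nat.zero_le d) (Nat.le_add_right d n)]

lemma myPi_eq (m : ℕ) : myPi w m = ‖∏ i ∈ Finset.Ioc 0 m, w i‖ := by
  rw [myPi, my_Icc_Ioc]

lemma mya_nonneg (pr : ℝ) (d : ℕ) : 0 ≤ mya w pr d := by
  rw [mya, myPi]
  positivity

lemma mya_smooth (hw0 : ∀ n, 1 ≤ n → w n ≠ 0) {M : ℝ} (hM : ∀ n, ‖w n‖ ≤ M)
    {pr : ℝ} (hpr : 0 < pr) (h t d : ℕ) (htd : t ≤ d) (hdh : d ≤ t + h) :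
    mya w pr t ≤ ((max M 1) ^ h) ^ pr * mya w pr d := by
  have hm1 : (1 : ℝ) ≤ max M 1 := le_max_right _ _
  have hsplit : myPi w d = myPi w t * ‖∏ i ∈ Finset.Ioc t d, w i‖ := by
    have := myPi_split (w := w) t (d - t)
    rwa [show t + (d - t) = d by omega] at this
  have hprod : ‖∏ i ∈ Finset.Ioc t d, w i‖ ≤ (max M 1) ^ h := by
    rw [norm_prod]
    calc ∏ i ∈ Finset.Ioc t d, ‖w i‖ ≤ ∏ _i ∈ Finset.Ioc t d, max M 1 :=
          Finset.prod_le_prod (fun i _ => norm_nonneg _)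
            (fun i _ => (hM i).trans (le_max_left _ _))
      _ = (max M 1) ^ (d - t) := by rw [Finset.prod_const, Nat.card_Ioc]
      _ ≤ (max M 1) ^ h := pow_le_pow_right₀ hm1 (by omega)
  have hπt := myPi_pos hw0 t
  have hπd := myPi_pos hw0 d
  have h1 : myPi w d ≤ myPi w t * (max M 1) ^ h := by
    rw [hsplit]
    exact mul_le_mul_of_nonneg_left hprod hπt.le
  have h2 : myPi w d ^ pr ≤ myPi w t ^ pr * ((max M 1) ^ h) ^ pr := by
    rw [← Real.mul_rpow hπt.le (by positivity)]
    exact Real.rpow_le_rpow hπd.le h1 hpr.le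
  have hm0 : (0 : ℝ) < max M 1 := lt_of_lt_of_le one_pos hm1
  have hπtp : (0 : ℝ) < myPi w t ^ pr := Real.rpow_pos_of_pos hπt pr
  have hπdp : (0 : ℝ) < myPi w d ^ pr := Real.rpow_pos_of_pos hπd pr
  rw [mya, mya]
  have h3 : (1 : ℝ) / myPi w t ^ pr ≤ ((max M 1) ^ h) ^ pr / myPi w d ^ pr := by
    rw [div_le_div_iff₀ hπtp hπdp]
    calc 1 * myPi w d ^ pr = myPi w d ^ pr := one_mul _
      _ ≤ myPi w t ^ pr * ((max M 1) ^ h) ^ pr := h2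
      _ = ((max M 1) ^ h) ^ pr * myPi w t ^ pr := mul_comm _ _
  calc (1 : ℝ) / myPi w t ^ pr ≤ ((max M 1) ^ h) ^ pr / myPi w d ^ pr := h3
    _ = ((max M 1) ^ h) ^ pr * (1 / myPi w d ^ pr) := by ring

end pi

section opk
variable {𝕂 : Type*} [RCLike 𝕂] {p : ℝ≥0∞} [Fact (1 ≤ p)]
variable (w : ℕ → 𝕂) (B : lp (fun _ : ℕ => 𝕂) p →L[𝕂] lp (fun _ : ℕ => 𝕂) p)

lemma myK {x : lp (fun _ : ℕ => 𝕂) p} {𝒩 : Set ℕ} {C ε : ℝ} (hppos : 0 < p.toReal)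
    (hw0 : ∀ n, 1 ≤ n → w n ≠ 0)
    (hB : ∀ (y : lp (fun _ : ℕ => 𝕂) p) (n : ℕ),
      (B y : ∀ _ : ℕ, 𝕂) n = w (n + 1) * (y : ∀ _ : ℕ, 𝕂) (n + 1))
    (hC : ∀ n ∈ 𝒩, ‖(B ^ n) x‖ ≤ C) (hε : 0 < ε)
    (hinf : ∀ n ∈ 𝒩, ε ≤ ‖((B ^ n) x : ∀ _ : ℕ, 𝕂) 0‖) :
    ∀ n ∈ 𝒩, ∀ F : Finset ℕ, (∀ d ∈ F, 1 ≤ d ∧ n + d ∈ 𝒩) →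
      ∑ d ∈ F, mya w p.toReal d ≤ C ^ p.toReal / ε ^ p.toReal := by
  intro n hn F hF
  have hxlb : ∀ m ∈ 𝒩, ε / myPi w m ≤ ‖(x : ∀ _ : ℕ, 𝕂) m‖ := by
    intro m hm
    have h0 := hinf m hm
    rw [my_coord w B hB m x 0] at h0
    simp only [zero_add] at h0
    rw [norm_mul, ← myPi_eq] at h0
    rw [div_le_iff₀ (myPi_pos hw0 m)]
    linarith [h0]
  have key : ∀ d ∈ F, ε / myPi w d ≤ ‖((B ^ n) x : ∀ _ : ℕ, 𝕂) d‖ := by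
    intro d hd
    obtain ⟨hd1, hdN⟩ := hF d hd
    have hcoord := my_coord w B hB n x d
    have hPdpos : (0 : ℝ) < ‖∏ i ∈ Finset.Ioc d (d + n), w i‖ := by
      rw [norm_pos_iff]
      exact Finset.prod_ne_zero_iff.mpr
        (fun i hi => hw0 i (by have := (Finset.mem_Ioc.mp hi).1; omega))
    have hxm : ε / myPi w (d + n) ≤ ‖(x : ∀ _ : ℕ, 𝕂) (d + n)‖ := by
      have := hxlb (n + d) (hdN)
      rwa [show n + d = d + n by omega] at this
    have hsplit := myPi_split (w := w) d n
    have hπd := myPi_pos hw0 d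
    have hπdn := myPi_pos hw0 (d + n)
    rw [hcoord, norm_mul, div_le_iff₀ hπd]
    calc ε = (ε / myPi w (d + n)) * myPi w (d + n) :=
          (div_mul_cancel₀ _ hπdn.ne').symm
      _ = (ε / myPi w (d + n)) * (myPi w d * ‖∏ i ∈ Finset.Ioc d (d + n), w i‖) := by
          rw [← hsplit]
      _ ≤ ‖(x : ∀ _ : ℕ, 𝕂) (d + n)‖ * (myPi w d * ‖∏ i ∈ Finset.Ioc d (d + n), w i‖) :=
          mul_le_mul_of_nonneg_right hxm (by positivity)
      _ = ‖∏ i ∈ Finset.Ioc d (d + n), w i‖ * ‖(x : ∀ _ : ℕ, 𝕂) (d + n)‖ * myPi w d := by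
          ring
  have hsum := lp.sum_rpow_le_norm_rpow hppos ((B ^ n) x) F
  have hsum2 : ∑ d ∈ F, (ε / myPi w d) ^ p.toReal
      ≤ ∑ d ∈ F, ‖((B ^ n) x : ∀ _ : ℕ, 𝕂) d‖ ^ p.toReal := by
    apply Finset.sum_le_sum
    intro d hd
    exact Real.rpow_le_rpow (div_nonneg hε.le (myPi_pos hw0 d).le)
      (key d hd) hppos.le
  have hsum3 : ∑ d ∈ F, ‖((B ^ n) x : ∀ _ : ℕ, 𝕂) d‖ ^ p.toReal ≤ C ^ p.toReal :=
    hsum.trans (Real.rpow_le_rpow (norm_nonneg _) (hC n hn) hppos.le)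
  have hlhs : ∑ d ∈ F, (ε / myPi w d) ^ p.toReal
      = ε ^ p.toReal * ∑ d ∈ F, mya w p.toReal d := by
    rw [Finset.mul_sum]
    apply Finset.sum_congr rfl
    intro d hd
    rw [Real.div_rpow hε.le (myPi_pos hw0 d).le, mya, div_eq_mul_one_div]
  rw [hlhs] at hsum2
  have hεp : (0 : ℝ) < ε ^ p.toReal := Real.rpow_pos_of_pos hε _
  rw [le_div_iff₀ hεp]
  calc (∑ d ∈ F, mya w p.toReal d) * ε ^ p.toReal
      = ε ^ p.toReal * ∑ d ∈ F, mya w p.toReal d := mul_comm _ _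
    _ ≤ C ^ p.toReal := le_trans hsum2 hsum3

end opk

/-- If for some `x ∈ ℓ_p` and some set `𝒩 ⊆ ℤ₊` of positive upper density the
orbit `B_w^n x`, `n ∈ 𝒩`, is bounded and stays away from `ker e₀*`, then
`∑_{n≥1} 1/|w₁⋯w_n|^p < ∞`. -/
theorem summable_of_upperDensity_orbit
    {𝕂 : Type*} [RCLike 𝕂] (p : ℝ≥0∞) [Fact (1 ≤ p)] (hp : p ≠ ⊤)
    (w : ℕ → 𝕂) (hw0 : ∀ n, 1 ≤ n → w n ≠ 0)
    (hwbdd : ∃ M : ℝ, ∀ n, ‖w n‖ ≤ M)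
    (B : lp (fun _ : ℕ => 𝕂) p →L[𝕂] lp (fun _ : ℕ => 𝕂) p)
    (hB : ∀ (x : lp (fun _ : ℕ => 𝕂) p) (n : ℕ),
        (B x : ∀ _ : ℕ, 𝕂) n = w (n + 1) * (x : ∀ _ : ℕ, 𝕂) (n + 1))
    (x : lp (fun _ : ℕ => 𝕂) p) (𝒩 : Set ℕ)
    (hdens : 0 < Filter.limsup
        (fun N : ℕ => ((𝒩 ∩ Set.Iic N).ncard : ℝ) / (N + 1)) Filter.atTop)
    (hbdd : ∃ C : ℝ, ∀ n ∈ 𝒩, ‖(B ^ n) x‖ ≤ C)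
    (hinf : ∃ ε : ℝ, 0 < ε ∧ ∀ n ∈ 𝒩, ε ≤ ‖((B ^ n) x : ∀ _ : ℕ, 𝕂) 0‖) :
    Summable (fun n : ℕ =>
      (1 : ℝ) / ‖∏ i ∈ Finset.Icc 1 (n + 1), w i‖ ^ p.toReal) := by
  classical
  obtain ⟨C, hC⟩ := hbdd
  obtain ⟨M, hM⟩ := hwbdd
  obtain ⟨ε, hε, hinf'⟩ := hinf
  have hp0 : p ≠ 0 := by
    intro h0
    have h1 : (1 : ℝ≥0∞) ≤ p := Fact.out
    rw [h0] at h1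
    simp at h1
  have hppos : 0 < p.toReal := ENNReal.toReal_pos hp0 hp
  -- the `ℓ^p` bound along difference sets
  have hK := myK w B hppos hw0 hB hC hε hinf'
  set K := C ^ p.toReal / ε ^ p.toReal with hKdef
  -- density extraction
  have hAcard : ∀ N : ℕ, ((𝒩 ∩ Set.Iic N).ncard : ℝ) = ((myAN 𝒩 N).card : ℝ) := by
    intro N
    congr 1
    rw [show 𝒩 ∩ Set.Iic N = ↑(myAN 𝒩 N) by
      ext m
      simp only [Set.mem_inter_iff, Set.mem_Iic, Finset.coe_sort_coe, Finset.mem_coe,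
        mem_myAN]
      tauto]
    exact Set.ncard_coe_finset _
  set L := Filter.limsup
      (fun N : ℕ => ((𝒩 ∩ Set.Iic N).ncard : ℝ) / (N + 1)) Filter.atTop with hLdef
  set δ := L / 2 with hδdef
  have hδ : 0 < δ := half_pos hdens
  have hfreq : ∀ N₀ : ℕ, ∃ N, N₀ ≤ N ∧ δ * (N + 1) ≤ ((myAN 𝒩 N).card : ℝ) := by
    intro N₀
    have hcb : Filter.IsCoboundedUnder (· ≤ ·) Filter.atTop
        (fun N : ℕ => ((𝒩 ∩ Set.Iic N).ncard : ℝ) / (N + 1)) :=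
      Filter.isCoboundedUnder_le_of_le Filter.atTop (x := 0)
        (fun N => by positivity)
    have hfr := Filter.frequently_lt_of_lt_limsup hcb
      (show δ < L by rw [hδdef]; linarith)
    obtain ⟨N, hδu, hge⟩ :=
      (hfr.and_eventually (Filter.eventually_ge_atTop N₀)).exists
    refine ⟨N, hge, ?_⟩
    have hpos : (0 : ℝ) < (N : ℝ) + 1 := by positivity
    rw [hAcard N] at hδu
    exact le_of_lt ((lt_div_iff₀ hpos).mp hδu)
  set k := ⌈(4 : ℝ) / δ⌉₊ with hkdef
  have hk : 4 ≤ (k : ℝ) * δ := by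
    have h1 : (4 : ℝ) / δ ≤ k := Nat.le_ceil _
    calc (4 : ℝ) = (4 / δ) * δ := by field_simp
      _ ≤ (k : ℝ) * δ := mul_le_mul_of_nonneg_right h1 hδ.le
  obtain ⟨h, hWin⟩ := my_windows 𝒩 δ hδ k hk hfreq
  set c1 := ((max M 1) ^ h) ^ p.toReal with hc1def
  have hc1 : 0 < c1 := by
    have hm1 : (1 : ℝ) ≤ max M 1 := le_max_right _ _
    exact Real.rpow_pos_of_pos (pow_pos (lt_of_lt_of_le one_pos hm1) h) _
  -- uniform bound on partial sums
  have hbound : ∀ T : ℕ, ∑ d ∈ Finset.Icc 1 T, mya w p.toReal d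
      ≤ c1 * (((h : ℝ) + 1) * ((k : ℝ) ^ 2 * K)) := by
    intro T
    obtain ⟨N, hNgood, hNwin⟩ := hWin T
    have hQpos : 0 < (myAN 𝒩 N).card := by
      rcases Nat.eq_zero_or_pos (myAN 𝒩 N).card with h0 | h0
      · exfalso
        rw [h0] at hNgood
        have : (0 : ℝ) < δ * ((N : ℝ) + 1) := by positivity
        simp only [Nat.cast_zero] at hNgood
        linarith
      · exact h0
    have hdtex : ∀ t : ℕ, ∃ d, 1 ≤ t → t ≤ T →
        (t ≤ d ∧ d ≤ t + h ∧ myPop 𝒩 k N d) := by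
      intro t
      by_cases h1 : 1 ≤ t ∧ t ≤ T
      · obtain ⟨d, hd⟩ := hNwin t h1.1 h1.2
        exact ⟨d, fun _ _ => hd⟩
      · exact ⟨0, fun ha hb => absurd ⟨ha, hb⟩ h1⟩
    choose dt hdt using hdtex
    set P := (Finset.Icc 1 (T + h)).filter (fun d => myPop 𝒩 k N d) with hPdef
    have hmemP : ∀ t, 1 ≤ t → t ≤ T → dt t ∈ P := by
      intro t h1 h2
      obtain ⟨hd1, hd2, hd3⟩ := hdt t h1 h2
      rw [hPdef, Finset.mem_filter, Finset.mem_Icc]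
      exact ⟨⟨by omega, by omega⟩, hd3⟩
    have hstep1 : ∑ d ∈ Finset.Icc 1 T, mya w p.toReal d
        ≤ c1 * ∑ t ∈ Finset.Icc 1 T, mya w p.toReal (dt t) := by
      rw [Finset.mul_sum]
      apply Finset.sum_le_sum
      intro t ht
      obtain ⟨ht1, htT⟩ := Finset.mem_Icc.mp ht
      obtain ⟨hd1, hd2, _⟩ := hdt t ht1 htT
      exact mya_smooth hw0 hM hppos h t (dt t) hd1 hd2
    have hstep2 : ∑ t ∈ Finset.Icc 1 T, mya w p.toReal (dt t)
        ≤ ((h : ℝ) + 1) * ∑ d ∈ P, mya w p.toReal d := by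
      have e1 : ∑ t ∈ Finset.Icc 1 T, mya w p.toReal (dt t)
          ≤ ∑ t ∈ Finset.Icc 1 T, ∑ d ∈ P,
              if t ≤ d ∧ d ≤ t + h then mya w p.toReal d else 0 := by
        apply Finset.sum_le_sum
        intro t ht
        obtain ⟨ht1, htT⟩ := Finset.mem_Icc.mp ht
        obtain ⟨hd1, hd2, _⟩ := hdt t ht1 htT
        rw [← Finset.sum_filter]
        apply Finset.single_le_sum (f := fun d => mya w p.toReal d)
          (fun d _ => mya_nonneg _ _)
        rw [Finset.mem_filter]
        exact ⟨hmemP t ht1 htT, hd1, hd2⟩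
      have e2 : ∑ t ∈ Finset.Icc 1 T, ∑ d ∈ P,
            (if t ≤ d ∧ d ≤ t + h then mya w p.toReal d else 0)
          = ∑ d ∈ P, ∑ t ∈ Finset.Icc 1 T,
            (if t ≤ d ∧ d ≤ t + h then mya w p.toReal d else 0) := Finset.sum_comm
      have e3 : ∀ d, ∑ t ∈ Finset.Icc 1 T,
            (if t ≤ d ∧ d ≤ t + h then mya w p.toReal d else 0)
          ≤ ((h : ℝ) + 1) * mya w p.toReal d := by
        intro d
        rw [← Finset.sum_filter]
        rw [Finset.sum_const, nsmul_eq_mul]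
        apply mul_le_mul_of_nonneg_right _ (mya_nonneg _ _)
        have hsub : (Finset.Icc 1 T).filter (fun t => t ≤ d ∧ d ≤ t + h)
            ⊆ Finset.Icc (d - h) d := by
          intro t ht
          obtain ⟨ht1, ht2, ht3⟩ := Finset.mem_filter.mp ht
          have := Finset.mem_Icc.mp ht1
          rw [Finset.mem_Icc]
          omega
        have := Finset.card_le_card hsub
        rw [Nat.card_Icc] at this
        have hcard : ((Finset.Icc 1 T).filter (fun t => t ≤ d ∧ d ≤ t + h)).card
            ≤ h + 1 := by omega
        exact_mod_cast hcard
      calc ∑ t ∈ Finset.Icc 1 T, mya w p.toReal (dt t)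
          ≤ ∑ t ∈ Finset.Icc 1 T, ∑ d ∈ P,
              (if t ≤ d ∧ d ≤ t + h then mya w p.toReal d else 0) := e1
        _ = ∑ d ∈ P, ∑ t ∈ Finset.Icc 1 T,
              (if t ≤ d ∧ d ≤ t + h then mya w p.toReal d else 0) := e2
        _ ≤ ∑ d ∈ P, ((h : ℝ) + 1) * mya w p.toReal d :=
              Finset.sum_le_sum (fun d _ => e3 d)
        _ = ((h : ℝ) + 1) * ∑ d ∈ P, mya w p.toReal d := by
              rw [Finset.mul_sum]
    have hstep3 : ∑ d ∈ P, mya w p.toReal d ≤ (k : ℝ) ^ 2 * K :=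
      my_popular_sum 𝒩 (mya w p.toReal) (mya_nonneg _) K k N (T + h) hQpos hK
    calc ∑ d ∈ Finset.Icc 1 T, mya w p.toReal d
        ≤ c1 * ∑ t ∈ Finset.Icc 1 T, mya w p.toReal (dt t) := hstep1
      _ ≤ c1 * (((h : ℝ) + 1) * ∑ d ∈ P, mya w p.toReal d) := by
          apply mul_le_mul_of_nonneg_left hstep2 hc1.le
      _ ≤ c1 * (((h : ℝ) + 1) * ((k : ℝ) ^ 2 * K)) := by
          apply mul_le_mul_of_nonneg_left _ hc1.le
          apply mul_le_mul_of_nonneg_left hstep3 (by positivity)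
  -- conclude summability
  have hshift : ∀ T : ℕ, ∑ i ∈ Finset.range T, mya w p.toReal (i + 1)
      = ∑ d ∈ Finset.Icc 1 T, mya w p.toReal d := by
    intro T
    induction T with
    | zero => simp
    | succ T ih =>
      rw [Finset.sum_range_succ, ih,
        Finset.sum_Icc_succ_top (by omega : 1 ≤ T + 1)]
  have hgoal : Summable (fun n : ℕ => mya w p.toReal (n + 1)) := by
    apply summable_of_sum_range_le (c := c1 * (((h : ℝ) + 1) * ((k : ℝ) ^ 2 * K)))
      (fun n => mya_nonneg _ _)
    intro T
    rw [hshift T]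
    exact hbound T
  exact hgoal
end

section
/- Let X be a Polish space, Λ a Borel subset of X, and T₁, T₂ two continuous self-maps of X. Assume that for every compact set K ⊆ X with K ∩ Λ = ∅, there exists an infinite set I ⊆ ℕ such that limsup_{n∈I} (T₁^{-n}(K) ∩ T₂^{-n}(K)) = ∅, where limsup of a sequence of sets is the set of points belonging to infinitely many of them. Then for any Borel probability measures m₁, m₂ on X such that m₁ is T₁-invariant, m₂ is T₂-invariant, and m₁(Λ) = 0 = m₂(Λ), the measures m₁ and m₂ are mutually singular. -/
/-!
Fix `ε > 0`. Tightness of `m₁ + m₂`, which does not charge `Λ`, gives a compact `K` disjoint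
from `Λ` with `(m₁ + m₂) Kᶜ < ε / 2`. By hypothesis the sets `T₁^{-n} K ∩ T₂^{-n} K`, `n ∈ I`,
have empty limsup, so their `m₁`-measure tends to `0` along `I`; pick `n ∈ I` where it is
`< ε / 2`. By invariance, `S = T₂^{-n} K` satisfies
`m₁ S + m₂ Sᶜ ≤ m₁ (T₁^{-n} K ∩ T₂^{-n} K) + m₁ Kᶜ + m₂ Kᶜ < ε`.
Since `ε` is arbitrary, `(m₁ ⊓ m₂) univ = 0`, i.e. `m₁ ⟂ₘ m₂`.
-/

open MeasureTheory Filter Set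
open scoped ENNReal Topology

namespace MeasureTheory

variable {α : Type*} [MeasurableSpace α]

theorem Measure.mutuallySingular_of_forall_exists_add_lt {μ ν : Measure α}
    (h : ∀ ε : ℝ≥0∞, 0 < ε → ∃ s, μ s + ν sᶜ < ε) : μ ⟂ₘ ν := by
  have hinf : (μ ⊓ ν) univ = 0 := by
    simp only [Measure.inf_apply MeasurableSet.univ, inter_univ]
    refine sInf_eq_bot.2 fun ε hε => ?_
    obtain ⟨s, hs⟩ := h ε hε
    exact ⟨_, ⟨s, rfl⟩, hs⟩
  rw [Measure.mutuallySingular_iff_disjoint, disjoint_iff]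
  exact Measure.measure_univ_eq_zero.1 hinf

theorem measurePreserving_of_measure_preimage_eq {μ : Measure α} {f : α → α}
    (hf : Measurable f) (h : ∀ s, MeasurableSet s → μ (f ⁻¹' s) = μ s) :
    MeasurePreserving f μ μ :=
  ⟨hf, Measure.ext fun s hs => by rw [Measure.map_apply hf hs, h s hs]⟩

theorem measure_preimage_add_measure_preimage_compl_le {μ₁ μ₂ : Measure α} {f₁ f₂ : α → α}
    (hf₁ : MeasurePreserving f₁ μ₁ μ₁) (hf₂ : MeasurePreserving f₂ μ₂ μ₂) {K : Set α}
    (hK : MeasurableSet K) :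
    μ₁ (f₂ ⁻¹' K) + μ₂ (f₂ ⁻¹' K)ᶜ ≤ μ₁ (f₁ ⁻¹' K ∩ f₂ ⁻¹' K) + (μ₁ + μ₂) Kᶜ := by
  have hsub : f₂ ⁻¹' K ⊆ (f₁ ⁻¹' K ∩ f₂ ⁻¹' K) ∪ f₁ ⁻¹' Kᶜ := fun x hx => by
    by_cases hx₁ : f₁ x ∈ K
    · exact Or.inl ⟨hx₁, hx⟩
    · exact Or.inr hx₁
  calc μ₁ (f₂ ⁻¹' K) + μ₂ (f₂ ⁻¹' K)ᶜ
      ≤ μ₁ (f₁ ⁻¹' K ∩ f₂ ⁻¹' K) + μ₁ (f₁ ⁻¹' Kᶜ) + μ₂ (f₂ ⁻¹' Kᶜ) :=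
        add_le_add_left ((measure_mono hsub).trans (measure_union_le _ _)) _
    _ = μ₁ (f₁ ⁻¹' K ∩ f₂ ⁻¹' K) + (μ₁ + μ₂) Kᶜ := by
        rw [hf₁.measure_preimage hK.compl.nullMeasurableSet,
          hf₂.measure_preimage hK.compl.nullMeasurableSet, add_assoc, Measure.add_apply]

theorem exists_mem_measure_lt_of_forall_finite (μ : Measure α) [IsFiniteMeasure μ]
    {A : ℕ → Set α} (hA : ∀ n, MeasurableSet (A n)) {I : Set ℕ} (hI : I.Infinite)
    (h : ∀ x, {n | n ∈ I ∧ x ∈ A n}.Finite) {ε : ℝ≥0∞} (hε : 0 < ε) :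
    ∃ n ∈ I, μ (A n) < ε := by
  have hnotMem : ∀ x, ∀ᶠ n in atTop ⊓ 𝓟 I, x ∉ A n := fun x => by
    have hx : ¬∃ᶠ n in atTop, n ∈ I ∧ x ∈ A n :=
      mt Nat.frequently_atTop_iff_infinite.1 (h x).not_infinite
    exact eventually_inf_principal.2 ((not_frequently.1 hx).mono fun n hn hnI hnA => hn ⟨hnI, hnA⟩)
  have htend : Tendsto (fun n => μ (A n)) (atTop ⊓ 𝓟 I) (𝓝 0) := by
    simpa using tendsto_measure_of_ae_tendsto_indicator_of_isFiniteMeasure (A := ∅) _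
      MeasurableSet.empty hA (ae_of_all μ fun x => (hnotMem x).mono fun n hn => by simpa using hn)
  have : (atTop ⊓ 𝓟 I).NeBot := frequently_iff_neBot.1 (Nat.frequently_atTop_iff_infinite.2 hI)
  obtain ⟨n, hn, hnI⟩ :=
    ((htend.eventually (gt_mem_nhds hε)).and (mem_inf_of_right (mem_principal_self I))).exists
  exact ⟨n, hnI, hn⟩

theorem exists_isCompact_disjoint_measure_compl_lt [TopologicalSpace α] [T2Space α]
    [OpensMeasurableSpace α] (μ : Measure α) [IsFiniteMeasure μ] [μ.InnerRegularCompactLTTop]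
    {Λ : Set α} (hΛ : MeasurableSet Λ) (hμΛ : μ Λ = 0) {ε : ℝ≥0∞} (hε : ε ≠ 0) :
    ∃ K, IsCompact K ∧ Disjoint K Λ ∧ μ Kᶜ < ε := by
  obtain ⟨K, hKΛ, hK, hKε⟩ := hΛ.compl.exists_isCompact_sdiff_lt (measure_ne_top μ _) hε
  refine ⟨K, hK, subset_compl_iff_disjoint_right.1 hKΛ, ?_⟩
  rwa [← measure_sdiff_null hμΛ, sdiff_eq, inter_comm, ← sdiff_eq]

end MeasureTheory

/-- General criterion for orthogonality: if for every compact `K` disjoint from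
`Λ` there is an infinite set `I ⊆ ℕ` along which `limsup (T₁^{-n}(K) ∩ T₂^{-n}(K)) = ∅`, then any
`T₁`-invariant and `T₂`-invariant Borel probability measures not charging `Λ` are mutually
singular. -/
theorem mutuallySingular_of_limsup_empty
    {X : Type*} [TopologicalSpace X] [PolishSpace X] [MeasurableSpace X] [BorelSpace X]
    (Λ : Set X) (hΛ : MeasurableSet Λ)
    (T₁ T₂ : X → X) (hT₁ : Continuous T₁) (hT₂ : Continuous T₂)
    (H : ∀ K : Set X, IsCompact K → K ∩ Λ = ∅ →
      ∃ I : Set ℕ, I.Infinite ∧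
        ∀ x : X, ¬ {n : ℕ | n ∈ I ∧ T₁^[n] x ∈ K ∧ T₂^[n] x ∈ K}.Infinite)
    (m₁ m₂ : Measure X) [IsProbabilityMeasure m₁] [IsProbabilityMeasure m₂]
    (h₁ : ∀ A : Set X, MeasurableSet A → m₁ (T₁ ⁻¹' A) = m₁ A)
    (h₂ : ∀ A : Set X, MeasurableSet A → m₂ (T₂ ⁻¹' A) = m₂ A)
    (hm₁ : m₁ Λ = 0) (hm₂ : m₂ Λ = 0) :
    m₁.MutuallySingular m₂ := by
  have hT₁m := measurePreserving_of_measure_preimage_eq hT₁.measurable h₁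
  have hT₂m := measurePreserving_of_measure_preimage_eq hT₂.measurable h₂
  refine Measure.mutuallySingular_of_forall_exists_add_lt fun ε hε => ?_
  have hε₂ := ENNReal.half_pos hε.ne'
  obtain ⟨K, hK, hKΛ, hKε⟩ := exists_isCompact_disjoint_measure_compl_lt (m₁ + m₂) hΛ
    (by simp [hm₁, hm₂]) hε₂.ne'
  have hKm := hK.isClosed.measurableSet
  obtain ⟨I, hI, hIK⟩ := H K hK (disjoint_iff_inter_eq_empty.1 hKΛ)
  obtain ⟨n, -, hn⟩ := exists_mem_measure_lt_of_forall_finite m₁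
    (A := fun n => T₁^[n] ⁻¹' K ∩ T₂^[n] ⁻¹' K)
    (fun n => ((hT₁.iterate n).measurable hKm).inter ((hT₂.iterate n).measurable hKm)) hI
    (fun x => not_infinite.1 (hIK x)) hε₂
  refine ⟨T₂^[n] ⁻¹' K, ?_⟩
  calc _ ≤ _ := measure_preimage_add_measure_preimage_compl_le (hT₁m.iterate n) (hT₂m.iterate n) hKm
    _ < ε / 2 + ε / 2 := ENNReal.add_lt_add hn hKε
    _ = ε := ENNReal.add_halves ε
end

section
/- Let X be a Polish topological vector space and let T₁, T₂ be continuous linear operators on X. If T₁ and T₂ share a non-zero periodic point (i.e., there exist x ∈ X, x ≠ 0, and d₁, d₂ ≥ 1 with T₁^{d₁} x = x and T₂^{d₂} x = x), then T₁ and T₂ are not orthogonal: there exist Borel probability measures m₁, m₂ on X with m₁ T₁-invariant, m₂ T₂-invariant, m₁({0}) = 0 = m₂({0}), such that m₁ and m₂ are not mutually singular. -/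
/-!
A non-zero point `x` of period `d` for `T` carries the uniform probability measure on its orbit
`x, T x, …, T^[d-1] x`. It is `T`-invariant because `T` permutes the orbit, and it does not charge
`0`, since `0` is fixed by the linear map `T` and hence cannot lie on the cycle of `x ≠ 0`. The
orbit measures of `T₁` and `T₂` both give positive mass to `{x}`, so they are not mutually
singular.
-/

open MeasureTheory Function ENNReal

theorem Function.IsPeriodicPt.birkhoffSum_apply_self {α M : Type*} [AddCommMonoid M]
    {f : α → α} {n : ℕ} {x : α} (h : IsPeriodicPt f n x) (g : α → M) :
    birkhoffSum f g n (f x) = birkhoffSum f g n x := by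
  cases n with
  | zero => simp
  | succ m =>
    rw [birkhoffSum_succ, ← iterate_succ_apply, h.eq, birkhoffSum_succ', add_comm]

theorem Function.IsPeriodicPt.iterate_ne_of_isFixedPt {α : Type*} {f : α → α} {n k : ℕ}
    {x a : α} (hx : IsPeriodicPt f n x) (ha : IsFixedPt f a) (hxa : x ≠ a) (hk : k ≤ n) :
    f^[k] x ≠ a := by
  intro hkx
  apply hxa
  rw [← hx.eq, ← Nat.sub_add_cancel hk, iterate_add_apply, hkx, (ha.iterate _).eq]

theorem MeasureTheory.Measure.not_mutuallySingular_of_measure_singleton_ne_zero {α : Type*}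
    [MeasurableSpace α] {μ ν : Measure α} {x : α} (hμ : μ {x} ≠ 0) (hν : ν {x} ≠ 0) :
    ¬ μ ⟂ₘ ν := by
  rintro ⟨s, -, hμs, hνs⟩
  by_cases hxs : x ∈ s
  · exact hμ (measure_mono_null (Set.singleton_subset_iff.2 hxs) hμs)
  · exact hν (measure_mono_null (Set.singleton_subset_iff.2 hxs) hνs)

namespace MeasureTheory.Measure

variable {α : Type*} [MeasurableSpace α] {f : α → α} {n : ℕ} {x : α}

noncomputable def periodicOrbit (f : α → α) (n : ℕ) (x : α) : Measure α :=
  (n : ℝ≥0∞)⁻¹ • birkhoffSum f dirac n x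

theorem periodicOrbit_apply (s : Set α) :
    periodicOrbit f n x s = (n : ℝ≥0∞)⁻¹ * birkhoffSum f (fun y ↦ dirac y s) n x := by
  simp [periodicOrbit, birkhoffSum]

theorem isProbabilityMeasure_periodicOrbit (hn : n ≠ 0) :
    IsProbabilityMeasure (periodicOrbit f n x) := by
  constructor
  simp [periodicOrbit_apply, birkhoffSum, ENNReal.inv_mul_cancel (Nat.cast_ne_zero.2 hn)]

variable [MeasurableSingletonClass α]

theorem periodicOrbit_preimage (h : IsPeriodicPt f n x) (s : Set α) :
    periodicOrbit f n x (f ⁻¹' s) = periodicOrbit f n x s := by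
  have dirac_preimage (y : α) : dirac y (f ⁻¹' s) = dirac (f y) s := by
    rw [dirac_apply, dirac_apply]
    exact Set.indicator_comp_right (g := 1) f
  rw [periodicOrbit_apply, periodicOrbit_apply, ← h.birkhoffSum_apply_self (dirac · s)]
  refine congrArg _ (Finset.sum_congr rfl fun k _ ↦ ?_)
  dsimp only
  rw [dirac_preimage, ← iterate_succ_apply, iterate_succ_apply']

theorem periodicOrbit_eq_zero_iff {s : Set α} :
    periodicOrbit f n x s = 0 ↔ ∀ k < n, f^[k] x ∉ s := by
  simp [periodicOrbit_apply, birkhoffSum, dirac_apply]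

theorem periodicOrbit_singleton_self_ne_zero (hn : n ≠ 0) : periodicOrbit f n x {x} ≠ 0 :=
  fun h ↦ periodicOrbit_eq_zero_iff.1 h 0 (Nat.pos_of_ne_zero hn) rfl

theorem periodicOrbit_singleton_eq_zero_of_isFixedPt {a : α} (h : IsPeriodicPt f n x)
    (ha : IsFixedPt f a) (hxa : x ≠ a) : periodicOrbit f n x {a} = 0 :=
  periodicOrbit_eq_zero_iff.2 fun _ hk ↦ h.iterate_ne_of_isFixedPt ha hxa hk.le

end MeasureTheory.Measure

open MeasureTheory.Measure in
theorem not_orthogonal_of_common_periodic_point_general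
    {𝕂 : Type*} [RCLike 𝕂] {X : Type*} [AddCommGroup X] [Module 𝕂 X]
    [TopologicalSpace X]
    [PolishSpace X] [MeasurableSpace X] [BorelSpace X]
    (T₁ T₂ : X → X) (h₁lin : IsLinearMap 𝕂 T₁)
    (h₂lin : IsLinearMap 𝕂 T₂)
    (hper : ∃ x : X, x ≠ 0 ∧ (∃ d₁ : ℕ, 1 ≤ d₁ ∧ T₁^[d₁] x = x) ∧
      (∃ d₂ : ℕ, 1 ≤ d₂ ∧ T₂^[d₂] x = x)) :
    ∃ m₁ m₂ : Measure X, IsProbabilityMeasure m₁ ∧ IsProbabilityMeasure m₂ ∧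
      (∀ A : Set X, MeasurableSet A → m₁ (T₁ ⁻¹' A) = m₁ A) ∧
      (∀ A : Set X, MeasurableSet A → m₂ (T₂ ⁻¹' A) = m₂ A) ∧
      m₁ {0} = 0 ∧ m₂ {0} = 0 ∧ ¬ m₁.MutuallySingular m₂ := by
  obtain ⟨x, hx, ⟨d₁, hd₁, hx₁⟩, ⟨d₂, hd₂, hx₂⟩⟩ := hper
  have hd₁ : d₁ ≠ 0 := Nat.one_le_iff_ne_zero.1 hd₁
  have hd₂ : d₂ ≠ 0 := Nat.one_le_iff_ne_zero.1 hd₂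
  refine ⟨periodicOrbit T₁ d₁ x, periodicOrbit T₂ d₂ x, isProbabilityMeasure_periodicOrbit hd₁,
    isProbabilityMeasure_periodicOrbit hd₂, fun A _ ↦ periodicOrbit_preimage hx₁ A,
    fun A _ ↦ periodicOrbit_preimage hx₂ A,
    periodicOrbit_singleton_eq_zero_of_isFixedPt hx₁ h₁lin.map_zero hx,
    periodicOrbit_singleton_eq_zero_of_isFixedPt hx₂ h₂lin.map_zero hx, ?_⟩
  exact not_mutuallySingular_of_measure_singleton_ne_zero
    (periodicOrbit_singleton_self_ne_zero hd₁) (periodicOrbit_singleton_self_ne_zero hd₂)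

/-- If two continuous linear operators on a Polish topological vector space
share a non-zero periodic point, then they are not orthogonal: they admit invariant probability
measures not charging `{0}` which are not mutually singular. -/
theorem not_orthogonal_of_common_periodic_point
    {𝕂 : Type*} [RCLike 𝕂] {X : Type*} [AddCommGroup X] [Module 𝕂 X]
    [TopologicalSpace X] [IsTopologicalAddGroup X] [ContinuousSMul 𝕂 X]
    [PolishSpace X] [MeasurableSpace X] [BorelSpace X]
    (T₁ T₂ : X → X) (h₁lin : IsLinearMap 𝕂 T₁) (h₁cont : Continuous T₁)
    (h₂lin : IsLinearMap 𝕂 T₂) (h₂cont : Continuous T₂)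
    (hper : ∃ x : X, x ≠ 0 ∧ (∃ d₁ : ℕ, 1 ≤ d₁ ∧ T₁^[d₁] x = x) ∧
      (∃ d₂ : ℕ, 1 ≤ d₂ ∧ T₂^[d₂] x = x)) :
    ∃ m₁ m₂ : Measure X, IsProbabilityMeasure m₁ ∧ IsProbabilityMeasure m₂ ∧
      (∀ A : Set X, MeasurableSet A → m₁ (T₁ ⁻¹' A) = m₁ A) ∧
      (∀ A : Set X, MeasurableSet A → m₂ (T₂ ⁻¹' A) = m₂ A) ∧
      m₁ {0} = 0 ∧ m₂ {0} = 0 ∧ ¬ m₁.MutuallySingular m₂ :=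
  not_orthogonal_of_common_periodic_point_general T₁ T₂ h₁lin h₂lin hper
end

section
/- Let 1 ≤ p < ∞ and let B_u, B_v be the weighted backward shifts on ℓ_p(ℤ₊) associated with weight sequences u and v, with ∑_{n=1}^∞ 1/|u₁⋯u_n|^p < ∞ and ∑_{n=1}^∞ 1/|v₁⋯v_n|^p < ∞. Assume there exist d ∈ ℕ, d ≥ 1, 0 ≤ j ≤ d−1 and a non-zero scalar C such that u₁⋯u_{dm+j} = C · v₁⋯v_{dm+j} for all m ≥ 0. Then B_u and B_v are not orthogonal: there exist Borel probability measures m_u, m_v on ℓ_p with m_u B_u-invariant, m_v B_v-invariant, m_u({0}) = 0 = m_v({0}), such that m_u and m_v are not mutually singular. -/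
open MeasureTheory Filter
open scoped ENNReal NNReal

/-!
For `n ≡ j (mod d)` put `z n = 1 / (u₁⋯u_n)`, and `z n = 0` otherwise. The summability of
`1 / |u₁⋯u_n|^p` puts `z` in `ℓ_p`, and `B_u^d z = z` since
`(B_u^d z) n = u_{n+1}⋯u_{n+d} · z (n+d)`. On the residue class of `j` the product relation gives
`z n = C⁻¹ / (v₁⋯v_n)`, so `z` is a `d`-periodic point of `B_v` as well. The uniform measures on
the two orbits of `z` are invariant, do not charge `{0}` (the orbit of a nonzero periodic point
of a linear map avoids `0`), and both charge `z`.
-/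

section OrbitMeasure

variable {X : Type*} [MeasurableSpace X]

noncomputable def orbitMeasure (T : X → X) (x : X) (d : ℕ) : Measure X :=
  (d : ℝ≥0∞)⁻¹ • ∑ k ∈ Finset.range d, Measure.dirac (T^[k] x)

variable {T : X → X} {x : X} {d : ℕ}

theorem isProbabilityMeasure_orbitMeasure (hd : d ≠ 0) :
    IsProbabilityMeasure (orbitMeasure T x d) := by
  constructor
  simp [orbitMeasure, ENNReal.inv_mul_cancel, hd]

theorem orbitMeasure_eq_zero_iff {s : Set X} (hs : MeasurableSet s) :
    orbitMeasure T x d s = 0 ↔ ∀ k < d, T^[k] x ∉ s := by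
  simp only [orbitMeasure, Measure.smul_apply, Measure.finsetSum_apply, smul_eq_mul,
    mul_eq_zero, ENNReal.inv_eq_zero, ENNReal.natCast_ne_top, false_or,
    Finset.sum_eq_zero_iff, Finset.mem_range, dirac_eq_zero_iff_not_mem hs]

theorem measurePreserving_orbitMeasure (hT : Measurable T) (hx : Function.IsPeriodicPt T d x) :
    MeasurePreserving T (orbitMeasure T x d) (orbitMeasure T x d) := by
  refine ⟨hT, ?_⟩
  have hshift : ∑ k ∈ Finset.range d, Measure.dirac (T^[k + 1] x)
      = ∑ k ∈ Finset.range d, Measure.dirac (T^[k] x) := by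
    rcases d with _ | e
    · simp only [Finset.range_zero, Finset.sum_empty]
    rw [Finset.sum_range_succ, Finset.sum_range_succ' _ e, hx.eq, Function.iterate_zero_apply]
  simp only [orbitMeasure, Measure.map_smul, Measure.map_finset_sum hT.aemeasurable,
    Measure.map_dirac' hT, ← Function.iterate_succ_apply' T, hshift]

theorem not_mutuallySingular_orbitMeasure {S : X → X} {d' : ℕ} (hd : d ≠ 0) (hd' : d' ≠ 0) :
    ¬ (orbitMeasure T x d).MutuallySingular (orbitMeasure S x d') := by
  rintro ⟨E, hE, hTE, hSE⟩
  rw [orbitMeasure_eq_zero_iff hE] at hTE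
  rw [orbitMeasure_eq_zero_iff hE.compl] at hSE
  exact hSE 0 (Nat.pos_of_ne_zero hd') (hTE 0 (Nat.pos_of_ne_zero hd))

end OrbitMeasure

theorem Function.IsPeriodicPt.iterate_ne_zero {X : Type*} [Zero X] {T : X → X} (hT : T 0 = 0)
    {d : ℕ} {x : X} (hx : Function.IsPeriodicPt T d x) (hd : d ≠ 0) (hx0 : x ≠ 0) (k : ℕ) :
    T^[k] x ≠ 0 := by
  intro hk
  have hdk : k ≤ d * k := Nat.le_mul_of_pos_left k (Nat.pos_of_ne_zero hd)
  apply hx0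
  calc x = T^[d * k] x := ((hx.mul_const k).eq).symm
    _ = T^[d * k - k] (T^[k] x) := by rw [← Function.iterate_add_apply, Nat.sub_add_cancel hdk]
    _ = 0 := by rw [hk, Function.iterate_fixed hT]

open Finset in
theorem weightedShift_iterate_apply {𝕂 : Type*} [NormedCommRing 𝕂] {p : ℝ≥0∞}
    {B : lp (fun _ : ℕ => 𝕂) p → lp (fun _ : ℕ => 𝕂) p} {w : ℕ → 𝕂}
    (hB : ∀ x n, (B x : ℕ → 𝕂) n = w (n + 1) * (x : ℕ → 𝕂) (n + 1))
    (k : ℕ) (x : lp (fun _ : ℕ => 𝕂) p) (n : ℕ) :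
    (B^[k] x : ℕ → 𝕂) n = (∏ i ∈ Icc (n + 1) (n + k), w i) * (x : ℕ → 𝕂) (n + k) := by
  induction k generalizing x with
  | zero => simp
  | succ k ih =>
    rw [Function.iterate_succ_apply, ih, hB, ← add_assoc, prod_Icc_succ_top (by omega), mul_assoc]

section ResidueSeq

open Finset

variable {𝕂 : Type*} [Field 𝕂] (w : ℕ → 𝕂) (d j : ℕ) (c : 𝕂)

def residueSeq : ℕ → 𝕂 := fun n => if n % d = j then c / ∏ i ∈ Icc 1 n, w i else 0

variable {w d j}

theorem prod_Icc_mul_prod_Icc_add (n k : ℕ) :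
    (∏ i ∈ Icc 1 n, w i) * ∏ i ∈ Icc (n + 1) (n + k), w i = ∏ i ∈ Icc 1 (n + k), w i := by
  induction k with
  | zero => simp
  | succ k ih =>
    rw [← add_assoc, prod_Icc_succ_top (by omega), prod_Icc_succ_top (by omega), ← ih, mul_assoc]

theorem prod_Icc_mul_residueSeq_add (hw : ∀ n, n % d = j → ∏ i ∈ Icc 1 n, w i ≠ 0) (n : ℕ) :
    (∏ i ∈ Icc (n + 1) (n + d), w i) * residueSeq w d j c (n + d) = residueSeq w d j c n := by
  by_cases hn : n % d = j
  · have hnd : (n + d) % d = j := by rwa [Nat.add_mod_right]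
    have hsplit := prod_Icc_mul_prod_Icc_add (w := w) n d
    have hP := hw _ hnd
    simp only [residueSeq, if_pos hn, if_pos hnd]
    rw [← hsplit] at hP ⊢
    field_simp [left_ne_zero_of_mul hP, right_ne_zero_of_mul hP]
  · have hnd : ¬ (n + d) % d = j := by rwa [Nat.add_mod_right]
    simp only [residueSeq, if_neg hn, if_neg hnd, mul_zero]

theorem residueSeq_eq_of_prod_eq {v : ℕ → 𝕂} {C : 𝕂}
    (h : ∀ m, ∏ i ∈ Icc 1 (d * m + j), w i = C * ∏ i ∈ Icc 1 (d * m + j), v i) :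
    residueSeq w d j c = residueSeq v d j (c / C) := by
  funext n
  by_cases hn : n % d = j
  · obtain ⟨m, rfl⟩ : ∃ m, n = d * m + j := ⟨n / d, by rw [← hn, Nat.div_add_mod]⟩
    simp only [residueSeq, if_pos hn, h, div_mul_eq_div_div]
  · simp only [residueSeq, if_neg hn]

end ResidueSeq

theorem memℓp_residueSeq {𝕂 : Type*} [NormedField 𝕂] {p : ℝ≥0∞} (hp : 0 < p.toReal)
    (w : ℕ → 𝕂) (d j : ℕ) (c : 𝕂)
    (hw : Summable fun n : ℕ => (1 : ℝ) / ‖∏ i ∈ Finset.Icc 1 (n + 1), w i‖ ^ p.toReal) :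
    Memℓp (residueSeq w d j c) p := by
  have hw' : Summable fun n : ℕ => (1 : ℝ) / ‖∏ i ∈ Finset.Icc 1 n, w i‖ ^ p.toReal :=
    (summable_nat_add_iff 1).mp hw
  refine memℓp_gen (.of_nonneg_of_le (fun n => by positivity) (fun n => ?_)
    (hw'.mul_left (‖c‖ ^ p.toReal)))
  by_cases hn : n % d = j
  · rw [residueSeq, if_pos hn, norm_div, Real.div_rpow (norm_nonneg _) (norm_nonneg _),
      mul_one_div]
  · rw [residueSeq, if_neg hn, norm_zero, Real.zero_rpow hp.ne']
    positivity

theorem isPeriodicPt_of_coe_eq_residueSeq {𝕂 : Type*} [NormedField 𝕂] {p : ℝ≥0∞}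
    {B : lp (fun _ : ℕ => 𝕂) p → lp (fun _ : ℕ => 𝕂) p} {w : ℕ → 𝕂} {d j : ℕ} {c : 𝕂}
    (hB : ∀ x n, (B x : ℕ → 𝕂) n = w (n + 1) * (x : ℕ → 𝕂) (n + 1))
    (hw : ∀ n, n % d = j → ∏ i ∈ Finset.Icc 1 n, w i ≠ 0)
    {x : lp (fun _ : ℕ => 𝕂) p} (hx : ⇑x = residueSeq w d j c) :
    Function.IsPeriodicPt B d x := by
  refine lp.ext (funext fun n => ?_)
  rw [weightedShift_iterate_apply hB, hx]
  exact prod_Icc_mul_residueSeq_add c hw n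

theorem not_orthogonal_of_product_relation_general
    {𝕂 : Type*} [RCLike 𝕂] (p : ℝ≥0∞) [Fact (1 ≤ p)] (hp : p ≠ ⊤)
    (u v : ℕ → 𝕂) (hu0 : ∀ n, 1 ≤ n → u n ≠ 0)
    (hsumu : Summable (fun n : ℕ =>
        (1 : ℝ) / ‖∏ i ∈ Finset.Icc 1 (n + 1), u i‖ ^ p.toReal))
    (Bu Bv : lp (fun _ : ℕ => 𝕂) p →L[𝕂] lp (fun _ : ℕ => 𝕂) p)
    (hBu : ∀ (x : lp (fun _ : ℕ => 𝕂) p) (n : ℕ),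
        (Bu x : ∀ _ : ℕ, 𝕂) n = u (n + 1) * (x : ∀ _ : ℕ, 𝕂) (n + 1))
    (hBv : ∀ (x : lp (fun _ : ℕ => 𝕂) p) (n : ℕ),
        (Bv x : ∀ _ : ℕ, 𝕂) n = v (n + 1) * (x : ∀ _ : ℕ, 𝕂) (n + 1))
    (hrel : ∃ d : ℕ, 1 ≤ d ∧ ∃ j : ℕ, j < d ∧ ∃ C : 𝕂, C ≠ 0 ∧ ∀ m : ℕ,
        ∏ i ∈ Finset.Icc 1 (d * m + j), u i = C * ∏ i ∈ Finset.Icc 1 (d * m + j), v i) :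
    ∃ mu mv : Measure (lp (fun _ : ℕ => 𝕂) p),
      IsProbabilityMeasure mu ∧ IsProbabilityMeasure mv ∧
      (∀ A : Set (lp (fun _ : ℕ => 𝕂) p), MeasurableSet A → mu (Bu ⁻¹' A) = mu A) ∧
      (∀ A : Set (lp (fun _ : ℕ => 𝕂) p), MeasurableSet A → mv (Bv ⁻¹' A) = mv A) ∧
      mu {0} = 0 ∧ mv {0} = 0 ∧ ¬ mu.MutuallySingular mv := by
  obtain ⟨d, hd, j, hj, C, -, hrel⟩ := hrel
  have hd0 : d ≠ 0 := Nat.one_le_iff_ne_zero.mp hd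
  have hPu : ∀ n, n % d = j → ∏ i ∈ Finset.Icc 1 n, u i ≠ 0 := fun n _ =>
    Finset.prod_ne_zero_iff.mpr fun i hi => hu0 i (Finset.mem_Icc.mp hi).1
  have hPv : ∀ n, n % d = j → ∏ i ∈ Finset.Icc 1 n, v i ≠ 0 := by
    intro n hn
    obtain ⟨m, rfl⟩ : ∃ m, n = d * m + j := ⟨n / d, by rw [← hn, Nat.div_add_mod]⟩
    exact right_ne_zero_of_mul (hrel m ▸ hPu _ hn)
  have hp0 : 0 < p.toReal := ENNReal.toReal_pos (zero_lt_one.trans_le Fact.out).ne' hp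
  let z : lp (fun _ : ℕ => 𝕂) p := ⟨residueSeq u d j 1, memℓp_residueSeq hp0 u d j 1 hsumu⟩
  have hz0 : z ≠ 0 := fun h => by
    have hj' : (z : ℕ → 𝕂) j = 0 := by rw [h]; rfl
    simp [z, residueSeq, Nat.mod_eq_of_lt hj, hPu j (Nat.mod_eq_of_lt hj)] at hj'
  have hzu : Function.IsPeriodicPt Bu d z := isPeriodicPt_of_coe_eq_residueSeq hBu hPu rfl
  have hzv : Function.IsPeriodicPt Bv d z :=
    isPeriodicPt_of_coe_eq_residueSeq hBv hPv (residueSeq_eq_of_prod_eq 1 hrel)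
  have horbit_ne_zero {B : lp (fun _ : ℕ => 𝕂) p →L[𝕂] lp (fun _ : ℕ => 𝕂) p}
      (hz : Function.IsPeriodicPt B d z) : orbitMeasure B z d {0} = 0 :=
    (orbitMeasure_eq_zero_iff (measurableSet_singleton 0)).mpr fun k _ =>
      hz.iterate_ne_zero (map_zero B) hd0 hz0 k
  refine ⟨orbitMeasure Bu z d, orbitMeasure Bv z d, isProbabilityMeasure_orbitMeasure hd0,
    isProbabilityMeasure_orbitMeasure hd0, fun A hA => ?_, fun A hA => ?_, horbit_ne_zero hzu,
    horbit_ne_zero hzv, not_mutuallySingular_orbitMeasure hd0 hd0⟩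
  · exact (measurePreserving_orbitMeasure Bu.continuous.measurable hzu).measure_preimage
      hA.nullMeasurableSet
  · exact (measurePreserving_orbitMeasure Bv.continuous.measurable hzv).measure_preimage
      hA.nullMeasurableSet

/-- Under the summability conditions, if `u₁⋯u_{dm+j} = C·v₁⋯v_{dm+j}` for all
`m ≥ 0` (for some `d ≥ 1`, `0 ≤ j ≤ d-1`, `C ≠ 0`), then `B_u` and `B_v` are not orthogonal:
they admit invariant probability measures not charging `{0}` which are not mutually singular. -/
theorem not_orthogonal_of_product_relation
    {𝕂 : Type*} [RCLike 𝕂] (p : ℝ≥0∞) [Fact (1 ≤ p)] (hp : p ≠ ⊤)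
    (u v : ℕ → 𝕂) (hu0 : ∀ n, 1 ≤ n → u n ≠ 0) (hv0 : ∀ n, 1 ≤ n → v n ≠ 0)
    (hubdd : ∃ M : ℝ, ∀ n, ‖u n‖ ≤ M) (hvbdd : ∃ M : ℝ, ∀ n, ‖v n‖ ≤ M)
    (hsumu : Summable (fun n : ℕ =>
        (1 : ℝ) / ‖∏ i ∈ Finset.Icc 1 (n + 1), u i‖ ^ p.toReal))
    (hsumv : Summable (fun n : ℕ =>
        (1 : ℝ) / ‖∏ i ∈ Finset.Icc 1 (n + 1), v i‖ ^ p.toReal))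
    (Bu Bv : lp (fun _ : ℕ => 𝕂) p →L[𝕂] lp (fun _ : ℕ => 𝕂) p)
    (hBu : ∀ (x : lp (fun _ : ℕ => 𝕂) p) (n : ℕ),
        (Bu x : ∀ _ : ℕ, 𝕂) n = u (n + 1) * (x : ∀ _ : ℕ, 𝕂) (n + 1))
    (hBv : ∀ (x : lp (fun _ : ℕ => 𝕂) p) (n : ℕ),
        (Bv x : ∀ _ : ℕ, 𝕂) n = v (n + 1) * (x : ∀ _ : ℕ, 𝕂) (n + 1))
    (hrel : ∃ d : ℕ, 1 ≤ d ∧ ∃ j : ℕ, j < d ∧ ∃ C : 𝕂, C ≠ 0 ∧ ∀ m : ℕ,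
        ∏ i ∈ Finset.Icc 1 (d * m + j), u i = C * ∏ i ∈ Finset.Icc 1 (d * m + j), v i) :
    ∃ mu mv : Measure (lp (fun _ : ℕ => 𝕂) p),
      IsProbabilityMeasure mu ∧ IsProbabilityMeasure mv ∧
      (∀ A : Set (lp (fun _ : ℕ => 𝕂) p), MeasurableSet A → mu (Bu ⁻¹' A) = mu A) ∧
      (∀ A : Set (lp (fun _ : ℕ => 𝕂) p), MeasurableSet A → mv (Bv ⁻¹' A) = mv A) ∧
      mu {0} = 0 ∧ mv {0} = 0 ∧ ¬ mu.MutuallySingular mv :=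
  not_orthogonal_of_product_relation_general p hp u v hu0 hsumu Bu Bv hBu hBv hrel
end

section
/- Let 𝕂 = ℝ or ℂ, 1 ≤ p < ∞, and let μ = ⊗_{n≥0} μ_n be a product probability measure on Ω = 𝕂^{ℤ₊}. Let w = (w_n)_{n≥1} be a sequence of non-zero scalars with ∑_{n=1}^∞ 1/|w₁⋯w_n|^p < ∞, and let B_w : Ω → Ω be the weighted backward shift (B_w t)_n = w_{n+1} t_{n+1}. If μ is B_w-invariant and ∫_𝕂 |t|^p dμ₀(t) < ∞, then μ(ℓ_p) = 1, where ℓ_p = { t ∈ Ω : ∑_{n=0}^∞ |t_n|^p < ∞ }. -/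
open MeasureTheory Filter
open scoped ENNReal

/-- `μ` is the product measure on `𝕂^{ℤ₊}` with marginals `μn`: its value on every cylinder set
is the corresponding finite product. -/
def IsProductMeasure {𝕂 : Type*} [MeasurableSpace 𝕂]
    (μ : Measure (ℕ → 𝕂)) (μn : ℕ → Measure 𝕂) : Prop :=
  ∀ (N : ℕ) (A : ℕ → Set 𝕂), (∀ n, MeasurableSet (A n)) →
    μ {t | ∀ n ≤ N, t n ∈ A n} = ∏ n ∈ Finset.range (N + 1), μn n (A n)

/-- If `∑_{n≥1} 1/|w₁⋯w_n|^p < ∞`, `μ = ⊗ μ_n` is a `B_w`-invariant product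
measure on `𝕂^{ℤ₊}`, and `∫ |t|^p dμ₀(t) < ∞`, then `μ(ℓ_p) = 1`. -/
theorem product_measure_charges_lp
    {𝕂 : Type*} [RCLike 𝕂] [MeasurableSpace 𝕂] [BorelSpace 𝕂]
    (p : ℝ) (hp : 1 ≤ p)
    (μ : Measure (ℕ → 𝕂)) [IsProbabilityMeasure μ]
    (μn : ℕ → Measure 𝕂) (hμn : ∀ n, IsProbabilityMeasure (μn n))
    (hμ : IsProductMeasure μ μn)
    (w : ℕ → 𝕂) (hw0 : ∀ n, 1 ≤ n → w n ≠ 0)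
    (hsum : Summable (fun n : ℕ => (1 : ℝ) / ‖∏ i ∈ Finset.Icc 1 (n + 1), w i‖ ^ p))
    (hinv : ∀ B : Set (ℕ → 𝕂), MeasurableSet B →
        μ ((fun t (n : ℕ) => w (n + 1) * t (n + 1)) ⁻¹' B) = μ B)
    (hmom : Integrable (fun t : 𝕂 => ‖t‖ ^ p) (μn 0)) :
    μ {t : ℕ → 𝕂 | Summable (fun n : ℕ => ‖t n‖ ^ p)} = 1 := by
  haveI := hμn
  have hp0 : 0 ≤ p := le_trans zero_le_one hp
  -- the integrand
  set f : 𝕂 → ℝ≥0∞ := fun x => ENNReal.ofReal (‖x‖ ^ p) with hf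
  have hfmeas : Measurable f := by
    exact (measurable_norm.pow_const p).ennreal_ofReal
  -- marginals of μ
  have hmarg : ∀ (n : ℕ) (A : Set 𝕂), MeasurableSet A →
      μ ((fun t => t n) ⁻¹' A) = μn n A := by
    intro n A hA
    have := hμ n (fun k => if k = n then A else Set.univ)
      (fun k => by by_cases h : k = n <;> simp [h, hA])
    have hset : {t : ℕ → 𝕂 | ∀ k ≤ n, t k ∈ if k = n then A else Set.univ}
        = (fun t => t n) ⁻¹' A := by
      ext t
      constructor
      · intro ht
        have := ht n le_rfl
        simpa using this
      · intro ht k hk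
        by_cases h : k = n
        · subst h; simpa using ht
        · simp [h]
    rw [hset] at this
    rw [this, Finset.prod_eq_single_of_mem n (Finset.self_mem_range_succ n)]
    · simp
    · intro k _ hkn
      simp [hkn]
  have hmapmarg : ∀ n : ℕ, Measure.map (fun t : ℕ → 𝕂 => t n) μ = μn n := by
    intro n
    ext A hA
    rw [Measure.map_apply (measurable_pi_apply n) hA, hmarg n A hA]
  -- invariance transfers to marginals
  have hstep : ∀ n : ℕ, Measure.map (fun x : 𝕂 => w (n + 1) * x) (μn (n + 1)) = μn n := by
    intro n
    ext A hA
    rw [Measure.map_apply (measurable_const_mul _) hA]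
    have h1 : μ ((fun t (k : ℕ) => w (k + 1) * t (k + 1)) ⁻¹' ((fun t => t n) ⁻¹' A))
        = μ ((fun t => t n) ⁻¹' A) :=
      hinv _ ((measurable_pi_apply n) hA)
    have h2 : (fun t (k : ℕ) => w (k + 1) * t (k + 1)) ⁻¹' ((fun t => t n) ⁻¹' A)
        = (fun t : ℕ → 𝕂 => t (n + 1)) ⁻¹' ((fun x : 𝕂 => w (n + 1) * x) ⁻¹' A) := by
      ext t; simp [Set.mem_preimage]
    rw [h2, hmarg (n + 1) _ (measurable_const_mul _ hA), hmarg n A hA] at h1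
    exact h1
  -- the moments
  set L : ℕ → ℝ≥0∞ := fun n => ∫⁻ x, f x ∂(μn n) with hL
  have hLstep : ∀ n : ℕ, L n = ENNReal.ofReal (‖w (n + 1)‖ ^ p) * L (n + 1) := by
    intro n
    calc L n = ∫⁻ x, f x ∂(Measure.map (fun x : 𝕂 => w (n + 1) * x) (μn (n + 1))) := by
          rw [hstep n]
      _ = ∫⁻ x, f (w (n + 1) * x) ∂(μn (n + 1)) :=
          lintegral_map hfmeas (measurable_const_mul _)
      _ = ∫⁻ x, ENNReal.ofReal (‖w (n + 1)‖ ^ p) * f x ∂(μn (n + 1)) := by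
          congr 1
          ext x
          simp only [hf]
          rw [norm_mul, Real.mul_rpow (norm_nonneg _) (norm_nonneg _),
            ENNReal.ofReal_mul (Real.rpow_nonneg (norm_nonneg _) _)]
      _ = ENNReal.ofReal (‖w (n + 1)‖ ^ p) * L (n + 1) :=
          lintegral_const_mul _ hfmeas
  have hLform : ∀ n : ℕ,
      L 0 = ENNReal.ofReal (‖∏ i ∈ Finset.Icc 1 n, w i‖ ^ p) * L n := by
    intro n
    induction n with
    | zero => simp
    | succ n ih =>
      rw [ih, hLstep n]
      rw [Finset.prod_Icc_succ_top (Nat.succ_le_succ (Nat.zero_le n)), norm_mul,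
        Real.mul_rpow (norm_nonneg _) (norm_nonneg _),
        ENNReal.ofReal_mul (Real.rpow_nonneg (norm_nonneg _) _), mul_assoc]
  have hprodne : ∀ n : ℕ, (∏ i ∈ Finset.Icc 1 n, w i) ≠ 0 := by
    intro n
    exact Finset.prod_ne_zero_iff.2 fun i hi => hw0 i (Finset.mem_Icc.1 hi).1
  have hL0lt : L 0 < ⊤ := by
    have := hmom.2
    rw [hasFiniteIntegral_iff_norm] at this
    have heq : L 0 = ∫⁻ x, ENNReal.ofReal ‖‖x‖ ^ p‖ ∂(μn 0) := by
      apply lintegral_congr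
      intro x
      simp [hf, Real.norm_of_nonneg (Real.rpow_nonneg (norm_nonneg _) _)]
    rw [heq]
    exact this
  -- explicit formula for L n
  have hLn : ∀ n : ℕ,
      L n = L 0 * ENNReal.ofReal (1 / ‖∏ i ∈ Finset.Icc 1 n, w i‖ ^ p) := by
    intro n
    have hpos : (0 : ℝ) < ‖∏ i ∈ Finset.Icc 1 n, w i‖ ^ p :=
      Real.rpow_pos_of_pos (norm_pos_iff.2 (hprodne n)) _
    have hc0 : ENNReal.ofReal (‖∏ i ∈ Finset.Icc 1 n, w i‖ ^ p) ≠ 0 := by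
      simpa [ENNReal.ofReal_eq_zero, not_le] using hpos
    have hcT : ENNReal.ofReal (‖∏ i ∈ Finset.Icc 1 n, w i‖ ^ p) ≠ ⊤ :=
      ENNReal.ofReal_ne_top
    rw [one_div, ENNReal.ofReal_inv_of_pos hpos, hLform n,
      mul_comm (ENNReal.ofReal (‖∏ i ∈ Finset.Icc 1 n, w i‖ ^ p)) (L n), mul_assoc,
      ENNReal.mul_inv_cancel hc0 hcT, mul_one]
  -- summability of moments
  have hsumL : (∑' n : ℕ, L n) ≠ ⊤ := by
    have hsum' : Summable (fun n : ℕ => (1 : ℝ) / ‖∏ i ∈ Finset.Icc 1 n, w i‖ ^ p) :=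
      (summable_nat_add_iff 1).mp hsum
    have h1 : (∑' n : ℕ, L n) =
        L 0 * ∑' n : ℕ, ENNReal.ofReal ((1 : ℝ) / ‖∏ i ∈ Finset.Icc 1 n, w i‖ ^ p) := by
      rw [← ENNReal.tsum_mul_left]
      exact tsum_congr fun n => hLn n
    have h2 : (∑' n : ℕ, ENNReal.ofReal ((1 : ℝ) / ‖∏ i ∈ Finset.Icc 1 n, w i‖ ^ p)) ≠ ⊤ := by
      rw [← ENNReal.ofReal_tsum_of_nonneg (fun n => by positivity) hsum']
      exact ENNReal.ofReal_ne_top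
    rw [h1]
    exact ENNReal.mul_ne_top hL0lt.ne h2
  -- integrate over Ω
  have hm : ∀ n : ℕ, Measurable (fun t : ℕ → 𝕂 => f (t n)) :=
    fun n => hfmeas.comp (measurable_pi_apply n)
  have hcoord : ∀ n : ℕ, ∫⁻ t : ℕ → 𝕂, f (t n) ∂μ = L n := by
    intro n
    calc ∫⁻ t : ℕ → 𝕂, f (t n) ∂μ
        = ∫⁻ x, f x ∂(Measure.map (fun t : ℕ → 𝕂 => t n) μ) :=
          (lintegral_map hfmeas (measurable_pi_apply n)).symm
      _ = L n := by rw [hmapmarg n]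
  have hint : ∫⁻ t : ℕ → 𝕂, (∑' n : ℕ, f (t n)) ∂μ ≠ ⊤ := by
    rw [lintegral_tsum (fun n => (hm n).aemeasurable)]
    rw [show (∑' n : ℕ, ∫⁻ t : ℕ → 𝕂, f (t n) ∂μ) = ∑' n : ℕ, L n from
      tsum_congr hcoord]
    exact hsumL
  have hglt : ∀ᵐ t : ℕ → 𝕂 ∂μ, (∑' n : ℕ, f (t n)) < ⊤ :=
    ae_lt_top (Measurable.ennreal_tsum hm) hint
  -- identify the summability set
  have hsetEq : {t : ℕ → 𝕂 | Summable (fun n : ℕ => ‖t n‖ ^ p)}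
      = {t : ℕ → 𝕂 | (∑' n : ℕ, f (t n)) < ⊤} := by
    ext t
    simp only [Set.mem_setOf_eq, lt_top_iff_ne_top, hf, ENNReal.ofReal]
    rw [ENNReal.tsum_coe_ne_top_iff_summable_coe]
    have key : (fun n : ℕ => ‖t n‖ ^ p) = fun n => (((‖t n‖ ^ p).toNNReal : ℝ)) :=
      funext fun n => (Real.coe_toNNReal _ (Real.rpow_nonneg (norm_nonneg _) _)).symm
    rw [key]
  rw [hsetEq]
  have hmeasset : MeasurableSet {t : ℕ → 𝕂 | (∑' n : ℕ, f (t n)) < ⊤} :=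
    measurableSet_lt (Measurable.ennreal_tsum hm) measurable_const
  rw [← prob_compl_eq_zero_iff hmeasset, Set.compl_setOf]
  exact ae_iff.1 hglt
end
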